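/- arXiv:math/0404083 — 5 statements merged into one kernel-verified Lean document; each statement's English description precedes it below -/
import Mathlib

section
/- Let (Z_n) be a Galton–Watson process with offspring variable L satisfying E[L] = 1 and E[L²] = ∞. Then lim_{n→∞} n · P[Z_n > 0] = 0. -/
open MeasureTheory ProbabilityTheory Filter Finset
open scoped ENNReal
set_option maxHeartbeats 1000000

namespace GW5

/-- `Aq s k = 1 + s + ... + s^(k-1)` -/
noncomputable def Aq (s : ℝ≥0∞) (k : ℕ) : ℝ≥0∞ := ∑ i ∈ range k, s ^ i

noncomputable def Bq (s : ℝ≥0∞) (k : ℕ) : ℝ≥0∞ := ∑ i ∈ range k, Aq s i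

noncomputable def Fg (p : ℕ → ℝ≥0∞) (s : ℝ≥0∞) : ℝ≥0∞ := ∑' k, p k * s ^ k

noncomputable def Psi (p : ℕ → ℝ≥0∞) (s : ℝ≥0∞) : ℝ≥0∞ := ∑' k, p k * Aq s k

noncomputable def Phi (p : ℕ → ℝ≥0∞) (s : ℝ≥0∞) : ℝ≥0∞ := ∑' k, p k * Bq s k

lemma pow_add_Aq {s : ℝ≥0∞} (hs : s ≤ 1) (k : ℕ) : s ^ k + (1 - s) * Aq s k = 1 := by
  induction k with
  | zero => simp [Aq]
  | succ k ih =>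
    have h1 : Aq s (k + 1) = Aq s k + s ^ k := by simp [Aq, Finset.sum_range_succ]
    have h2 : s + (1 - s) = 1 := add_tsub_cancel_of_le hs
    calc s ^ (k + 1) + (1 - s) * Aq s (k + 1)
        = (s + (1 - s)) * s ^ k + (1 - s) * Aq s k := by rw [h1]; ring
      _ = 1 := by rw [h2, one_mul, ih]

lemma Aq_add_Bq {s : ℝ≥0∞} (hs : s ≤ 1) (k : ℕ) : Aq s k + (1 - s) * Bq s k = k := by
  induction k with
  | zero => simp [Aq, Bq]
  | succ k ih =>
    have h1 : Aq s (k + 1) = Aq s k + s ^ k := by simp [Aq, Finset.sum_range_succ]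
    have h2 : Bq s (k + 1) = Bq s k + Aq s k := by simp [Bq, Finset.sum_range_succ]
    have : Aq s (k + 1) + (1 - s) * Bq s (k + 1)
        = (Aq s k + (1 - s) * Bq s k) + (s ^ k + (1 - s) * Aq s k) := by rw [h1, h2]; ring
    rw [this, ih, pow_add_Aq hs]
    push_cast; ring

variable {p : ℕ → ℝ≥0∞}

lemma Fg_add_Psi (hp1 : ∑' k, p k = 1) {s : ℝ≥0∞} (hs : s ≤ 1) :
    Fg p s + (1 - s) * Psi p s = 1 := by
  have : Fg p s + (1 - s) * Psi p s = ∑' k, p k * (s ^ k + (1 - s) * Aq s k) := by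
    rw [Fg, Psi, ← ENNReal.tsum_mul_left, ← ENNReal.tsum_add]
    congr 1; funext k; ring
  rw [this]
  simp_rw [pow_add_Aq hs, mul_one, hp1]

lemma Psi_add_Phi (hpm : ∑' k, p k * k = 1) {s : ℝ≥0∞} (hs : s ≤ 1) :
    Psi p s + (1 - s) * Phi p s = 1 := by
  have : Psi p s + (1 - s) * Phi p s = ∑' k, p k * (Aq s k + (1 - s) * Bq s k) := by
    rw [Psi, Phi, ← ENNReal.tsum_mul_left, ← ENNReal.tsum_add]
    congr 1; funext k; ring
  rw [this]
  simp_rw [Aq_add_Bq hs]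
  exact hpm

lemma Fg_mono : Monotone (Fg p) := fun s t hst =>
  ENNReal.tsum_le_tsum fun k => mul_le_mul_right (pow_le_pow_left' hst k) _

lemma Fg_le_one (hp1 : ∑' k, p k = 1) {s : ℝ≥0∞} (hs : s ≤ 1) : Fg p s ≤ 1 := by
  calc Fg p s ≤ Fg p 1 := Fg_mono hs
    _ = 1 := by simp [Fg, hp1]

lemma Aq_mono (k : ℕ) : Monotone fun s => Aq s k := fun s t hst =>
  Finset.sum_le_sum fun i _ => pow_le_pow_left' hst i

lemma Phi_mono : Monotone (Phi p) := fun s t hst =>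
  ENNReal.tsum_le_tsum fun k => mul_le_mul_right
    (Finset.sum_le_sum fun i _ => Aq_mono i hst) _

lemma Psi_pos {k₀ : ℕ} (hk₀ : 2 ≤ k₀) (hpk : p k₀ ≠ 0) (s : ℝ≥0∞) : p k₀ ≤ Psi p s := by
  have h1 : (1 : ℝ≥0∞) ≤ Aq s k₀ := by
    have : s ^ 0 ≤ Aq s k₀ :=
      Finset.single_le_sum (f := fun i => s ^ i) (fun i _ => zero_le)
        (Finset.mem_range.2 (by omega))
    simpa using this
  calc p k₀ = p k₀ * 1 := (mul_one _).symm
    _ ≤ p k₀ * Aq s k₀ := mul_le_mul_right h1 _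
    _ ≤ Psi p s := ENNReal.le_tsum k₀

lemma Phi_pos {k₀ : ℕ} (hk₀ : 2 ≤ k₀) (hpk : p k₀ ≠ 0) (s : ℝ≥0∞) : p k₀ ≤ Phi p s := by
  have h1 : (1 : ℝ≥0∞) ≤ Bq s k₀ := by
    have h0 : Aq s 1 ≤ Bq s k₀ :=
      Finset.single_le_sum (f := fun i => Aq s i) (fun i _ => zero_le)
        (Finset.mem_range.2 (by omega))
    have : Aq s 1 = 1 := by simp [Aq]
    rwa [this] at h0
  calc p k₀ = p k₀ * 1 := (mul_one _).symm
    _ ≤ p k₀ * Bq s k₀ := mul_le_mul_right h1 _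
    _ ≤ Phi p s := ENNReal.le_tsum k₀

lemma Fg_lt_one (hp1 : ∑' k, p k = 1) {k₀ : ℕ} (hk₀ : 2 ≤ k₀) (hpk : p k₀ ≠ 0)
    {s : ℝ≥0∞} (hs : s < 1) : Fg p s < 1 := by
  have hpos : (1 - s) * Psi p s ≠ 0 := by
    refine mul_ne_zero ?_ ?_
    · simpa [pos_iff_ne_zero] using (show (0:ℝ≥0∞) < 1 - s from tsub_pos_of_lt hs)
    · exact fun h => hpk (le_antisymm (h ▸ Psi_pos hk₀ hpk s) (zero_le))
  have hne : Fg p s ≠ ⊤ := (Fg_le_one hp1 hs.le).trans_lt (by norm_num) |>.ne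
  calc Fg p s < Fg p s + (1 - s) * Psi p s := ENNReal.lt_add_right hne hpos
    _ = 1 := Fg_add_Psi hp1 hs.le




variable {Ω : Type*} [MeasurableSpace Ω] {P : Measure Ω}

lemma comp_eval [IsProbabilityMeasure P] {X : Ω → ℕ} (hX : Measurable X) (φ : ℕ → ℝ≥0∞) :
    ∫⁻ ω, φ (X ω) ∂P = ∑' k, P (X ⁻¹' {k}) * φ k := by
  rw [← lintegral_map (measurable_of_countable φ) hX, lintegral_countable']
  congr 1; funext k
  rw [Measure.map_apply hX (measurableSet_singleton k), mul_comm]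

lemma measurable_nat_elim {m : MeasurableSpace Ω} {g : Ω → ℕ} {F : ℕ → Ω → ℕ}
    (hg : Measurable[m] g) (hF : ∀ j, Measurable[m] (F j)) :
    Measurable[m] fun ω => F (g ω) ω := by
  apply measurable_to_countable'
  intro k
  have : (fun ω => F (g ω) ω) ⁻¹' {k} = ⋃ j, g ⁻¹' {j} ∩ F j ⁻¹' {k} := by
    ext ω
    simp only [Set.mem_preimage, Set.mem_singleton_iff, Set.mem_iUnion, Set.mem_inter_iff]
    exact ⟨fun h => ⟨g ω, rfl, h⟩, fun ⟨j, hj, hk⟩ => by rw [hj]; exact hk⟩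
  rw [this]
  exact MeasurableSet.iUnion fun j =>
    (hg (measurableSet_singleton j)).inter (hF j (measurableSet_singleton k))

variable (Lfam : ℕ → ℕ → Ω → ℕ)

/-- sigma algebra generated by a set of coordinates -/
def GS (A : Set (ℕ × ℕ)) : MeasurableSpace Ω :=
  ⨆ q ∈ A, MeasurableSpace.comap (fun ω => Lfam q.1 q.2 ω) inferInstance

lemma GS_le (hmLfam : ∀ n i, Measurable (Lfam n i)) (A : Set (ℕ × ℕ)) :
    GS Lfam A ≤ ‹MeasurableSpace Ω› :=
  iSup₂_le fun q _ => measurable_iff_comap_le.mp (hmLfam q.1 q.2)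

lemma measurable_GS {A : Set (ℕ × ℕ)} {n i : ℕ} (h : (n, i) ∈ A) :
    Measurable[GS Lfam A] (Lfam n i) :=
  measurable_iff_comap_le.mpr
    (le_biSup (f := fun q : ℕ × ℕ => MeasurableSpace.comap (fun ω => Lfam q.1 q.2 ω)
      inferInstance) h)

lemma GS_mono {A B : Set (ℕ × ℕ)} (hAB : A ⊆ B) : GS Lfam A ≤ GS Lfam B :=
  iSup₂_le fun q hq =>
    le_biSup (f := fun q : ℕ × ℕ => MeasurableSpace.comap (fun ω => Lfam q.1 q.2 ω)
      inferInstance) (hAB hq)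

lemma indepFun_of_GS (hmLfam : ∀ n i, Measurable (Lfam n i))
    (hindep : iIndepFun (fun p : ℕ × ℕ => Lfam p.1 p.2) P)
    {A B : Set (ℕ × ℕ)} (hAB : Disjoint A B) {β γ : Type*} [MeasurableSpace β]
    [MeasurableSpace γ] {X : Ω → β} {Y : Ω → γ}
    (hX : Measurable[GS Lfam A] X) (hY : Measurable[GS Lfam B] Y) :
    IndepFun X Y P := by
  rw [IndepFun_iff_Indep]
  have hbase := indep_iSup_of_disjoint
    (m := fun q : ℕ × ℕ => MeasurableSpace.comap (fun ω => Lfam q.1 q.2 ω) inferInstance)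
    (fun q => measurable_iff_comap_le.mp (hmLfam q.1 q.2)) hindep.iIndep hAB
  exact indep_of_indep_of_le_left
    (indep_of_indep_of_le_right hbase (measurable_iff_comap_le.mp hY))
    (measurable_iff_comap_le.mp hX)

variable (Z : ℕ → Ω → ℕ)

lemma measurable_Z_GS (hmLfam : ∀ n i, Measurable (Lfam n i))
    (hZ0 : ∀ ω, Z 0 ω = 1)
    (hZrec : ∀ n ω, Z (n + 1) ω = ∑ i ∈ Finset.range (Z n ω), Lfam (n + 1) i ω) :
    ∀ n, Measurable[GS Lfam {q | q.1 ≤ n}] (Z n) := by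
  intro n
  induction n with
  | zero =>
    have : Z 0 = fun _ => 1 := funext hZ0
    rw [this]; exact measurable_const
  | succ n ih =>
    have hZeq : Z (n + 1) = fun ω =>
        (fun j ω' => ∑ i ∈ Finset.range j, Lfam (n + 1) i ω') (Z n ω) ω := by
      funext ω; exact hZrec n ω
    rw [hZeq]
    refine measurable_nat_elim (F := fun j ω' => ∑ i ∈ Finset.range j, Lfam (n + 1) i ω') (ih.mono (GS_mono Lfam ?_) le_rfl) fun j => ?_
    · intro q hq; exact Nat.le_succ_of_le hq
    · exact Finset.measurable_sum _ fun i _ =>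
        measurable_GS Lfam (show ((n+1 : ℕ), i) ∈ {q : ℕ × ℕ | q.1 ≤ n + 1} from Set.mem_setOf.2 (le_refl _))


lemma meas_pow {m : MeasurableSpace Ω} {f : Ω → ℕ} (hf : Measurable[m] f) (s : ℝ≥0∞) :
    Measurable[m] fun ω => s ^ f ω :=
  (measurable_of_countable (fun j : ℕ => s ^ j)).comp hf

lemma Lfam_preimage {L : Ω → ℕ} (hmL : Measurable L)
    (hmLfam : ∀ n i, Measurable (Lfam n i))
    (hid : ∀ n i, Measure.map (Lfam n i) P = Measure.map L P) (n i k : ℕ) :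
    P (Lfam n i ⁻¹' {k}) = P (L ⁻¹' {k}) := by
  have h1 := Measure.map_apply (μ := P) (hmLfam n i) (measurableSet_singleton k)
  have h2 := Measure.map_apply (μ := P) hmL (measurableSet_singleton k)
  rw [← h1, ← h2, hid]

lemma row_lintegral [IsProbabilityMeasure P] {L : Ω → ℕ} (hmL : Measurable L)
    (hmLfam : ∀ n i, Measurable (Lfam n i))
    (hindep : iIndepFun (fun p : ℕ × ℕ => Lfam p.1 p.2) P)
    (hid : ∀ n i, Measure.map (Lfam n i) P = Measure.map L P)
    (n : ℕ) (s : ℝ≥0∞) (k : ℕ) :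
    ∫⁻ ω, ∏ i ∈ range k, s ^ Lfam (n + 1) i ω ∂P
      = (Fg (fun j => P (L ⁻¹' {j})) s) ^ k := by
  induction k with
  | zero => simp
  | succ k ih =>
    have hsingle : ∫⁻ ω, s ^ Lfam (n + 1) k ω ∂P = Fg (fun j => P (L ⁻¹' {j})) s := by
      rw [comp_eval (hmLfam (n + 1) k) (fun j => s ^ j), Fg]
      congr 1; funext j
      rw [Lfam_preimage Lfam hmL hmLfam hid]
    have hind : IndepFun (fun ω => ∏ i ∈ range k, s ^ Lfam (n + 1) i ω)
        (fun ω => s ^ Lfam (n + 1) k ω) P := by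
      refine indepFun_of_GS Lfam hmLfam hindep
        (A := {q | q.1 = n + 1 ∧ q.2 < k}) (B := {((n + 1 : ℕ), k)}) ?_ ?_ ?_
      · rw [Set.disjoint_left]
        rintro ⟨a, b⟩ hab hmem
        simp only [Set.mem_setOf_eq] at hab
        simp only [Set.mem_singleton_iff, Prod.mk.injEq] at hmem
        omega
      · exact Finset.measurable_prod _ fun i hi =>
          meas_pow (measurable_GS Lfam (show ((n + 1 : ℕ), i) ∈
            {q : ℕ × ℕ | q.1 = n + 1 ∧ q.2 < k} from ⟨rfl, Finset.mem_range.1 hi⟩)) s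
      · exact meas_pow (measurable_GS Lfam (show ((n + 1 : ℕ), k) ∈
            ({((n + 1 : ℕ), k)} : Set (ℕ × ℕ)) from rfl)) s
    calc ∫⁻ ω, ∏ i ∈ range (k + 1), s ^ Lfam (n + 1) i ω ∂P
        = ∫⁻ ω, (∏ i ∈ range k, s ^ Lfam (n + 1) i ω) * s ^ Lfam (n + 1) k ω ∂P := by
          congr 1; funext ω; rw [Finset.prod_range_succ]
      _ = (∫⁻ ω, ∏ i ∈ range k, s ^ Lfam (n + 1) i ω ∂P) * ∫⁻ ω, s ^ Lfam (n + 1) k ω ∂P :=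
          lintegral_mul_eq_lintegral_mul_lintegral_of_indepFun
            (Finset.measurable_prod _ fun i _ => meas_pow (hmLfam (n + 1) i) s)
            (meas_pow (hmLfam (n + 1) k) s) hind
      _ = (Fg (fun j => P (L ⁻¹' {j})) s) ^ (k + 1) := by rw [ih, hsingle, pow_succ]

lemma gw_step [IsProbabilityMeasure P] {L : Ω → ℕ} (hmL : Measurable L)
    (hmLfam : ∀ n i, Measurable (Lfam n i))
    (hindep : iIndepFun (fun p : ℕ × ℕ => Lfam p.1 p.2) P)
    (hid : ∀ n i, Measure.map (Lfam n i) P = Measure.map L P)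
    (hZ0 : ∀ ω, Z 0 ω = 1)
    (hZrec : ∀ n ω, Z (n + 1) ω = ∑ i ∈ Finset.range (Z n ω), Lfam (n + 1) i ω)
    (n : ℕ) (s : ℝ≥0∞) :
    ∫⁻ ω, s ^ Z (n + 1) ω ∂P = ∫⁻ ω, (Fg (fun j => P (L ⁻¹' {j})) s) ^ Z n ω ∂P := by
  set p : ℕ → ℝ≥0∞ := fun j => P (L ⁻¹' {j}) with hp
  have hZG := measurable_Z_GS Lfam Z hmLfam hZ0 hZrec
  have hZmeas : ∀ m, Measurable (Z m) := fun m =>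
    (hZG m).mono (GS_le Lfam hmLfam _) le_rfl
  have hpt : ∀ ω, s ^ Z (n + 1) ω = ∑' k, Set.indicator (Z n ⁻¹' {k})
      (fun ω' => ∏ i ∈ range k, s ^ Lfam (n + 1) i ω') ω := by
    intro ω
    have h1 : ∑' k, Set.indicator (Z n ⁻¹' {k})
        (fun ω' => ∏ i ∈ range k, s ^ Lfam (n + 1) i ω') ω
        = Set.indicator (Z n ⁻¹' {Z n ω})
            (fun ω' => ∏ i ∈ range (Z n ω), s ^ Lfam (n + 1) i ω') ω :=
      tsum_eq_single (Z n ω) fun k hk =>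
        Set.indicator_of_notMem
          (show ω ∉ Z n ⁻¹' {k} from fun h => hk (Set.mem_singleton_iff.1 h).symm) _
    rw [h1, Set.indicator_of_mem (show ω ∈ Z n ⁻¹' {Z n ω} from rfl),
      hZrec n ω, ← Finset.prod_pow_eq_pow_sum]
  calc ∫⁻ ω, s ^ Z (n + 1) ω ∂P
      = ∫⁻ ω, ∑' k, Set.indicator (Z n ⁻¹' {k})
          (fun ω' => ∏ i ∈ range k, s ^ Lfam (n + 1) i ω') ω ∂P := by
        congr 1; funext ω; exact hpt ω
    _ = ∑' k, ∫⁻ ω, Set.indicator (Z n ⁻¹' {k})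
          (fun ω' => ∏ i ∈ range k, s ^ Lfam (n + 1) i ω') ω ∂P := by
        refine lintegral_tsum fun k => Measurable.aemeasurable ?_
        exact Measurable.indicator
          (Finset.measurable_prod _ fun i _ => meas_pow (hmLfam (n + 1) i) s)
          (hZmeas n (measurableSet_singleton k))
    _ = ∑' k, P (Z n ⁻¹' {k}) * (Fg p s) ^ k := by
        congr 1; funext k
        have hsplit : ∀ ω, Set.indicator (Z n ⁻¹' {k})
            (fun ω' => ∏ i ∈ range k, s ^ Lfam (n + 1) i ω') ω
            = Set.indicator (Z n ⁻¹' {k}) (fun _ => (1 : ℝ≥0∞)) ω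
              * ∏ i ∈ range k, s ^ Lfam (n + 1) i ω := by
          intro ω
          by_cases h : ω ∈ Z n ⁻¹' {k}
          · rw [Set.indicator_of_mem h, Set.indicator_of_mem h, one_mul]
          · rw [Set.indicator_of_notMem h, Set.indicator_of_notMem h, zero_mul]
        have hind : IndepFun (Set.indicator (Z n ⁻¹' {k}) (fun _ => (1 : ℝ≥0∞)))
            (fun ω => ∏ i ∈ range k, s ^ Lfam (n + 1) i ω) P := by
          refine indepFun_of_GS Lfam hmLfam hindep
            (A := {q | q.1 ≤ n}) (B := {q | q.1 = n + 1}) ?_ ?_ ?_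
          · rw [Set.disjoint_left]; rintro ⟨a, b⟩ ha hb
            simp only [Set.mem_setOf_eq] at ha hb; omega
          · exact Measurable.indicator measurable_const
              ((hZG n) (measurableSet_singleton k))
          · exact Finset.measurable_prod _ fun i _ =>
              meas_pow (measurable_GS Lfam (show ((n + 1 : ℕ), i) ∈
                {q : ℕ × ℕ | q.1 = n + 1} from rfl)) s
        calc ∫⁻ ω, Set.indicator (Z n ⁻¹' {k})
              (fun ω' => ∏ i ∈ range k, s ^ Lfam (n + 1) i ω') ω ∂P
            = ∫⁻ ω, Set.indicator (Z n ⁻¹' {k}) (fun _ => (1 : ℝ≥0∞)) ω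
                * ∏ i ∈ range k, s ^ Lfam (n + 1) i ω ∂P := by
              congr 1; funext ω; exact hsplit ω
          _ = (∫⁻ ω, Set.indicator (Z n ⁻¹' {k}) (fun _ => (1 : ℝ≥0∞)) ω ∂P)
                * ∫⁻ ω, ∏ i ∈ range k, s ^ Lfam (n + 1) i ω ∂P :=
              lintegral_mul_eq_lintegral_mul_lintegral_of_indepFun
                (Measurable.indicator measurable_const
                  (hZmeas n (measurableSet_singleton k)))
                (Finset.measurable_prod _ fun i _ => meas_pow (hmLfam (n + 1) i) s) hind
          _ = P (Z n ⁻¹' {k}) * (Fg p s) ^ k := by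
              rw [row_lintegral Lfam hmL hmLfam hindep hid n s k]
              congr 1
              exact lintegral_indicator_one (hZmeas n (measurableSet_singleton k))
    _ = ∫⁻ ω, (Fg p s) ^ Z n ω ∂P := by
        rw [comp_eval (hZmeas n) (fun k => (Fg p s) ^ k)]

lemma gw_iterate [IsProbabilityMeasure P] {L : Ω → ℕ} (hmL : Measurable L)
    (hmLfam : ∀ n i, Measurable (Lfam n i))
    (hindep : iIndepFun (fun p : ℕ × ℕ => Lfam p.1 p.2) P)
    (hid : ∀ n i, Measure.map (Lfam n i) P = Measure.map L P)
    (hZ0 : ∀ ω, Z 0 ω = 1)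
    (hZrec : ∀ n ω, Z (n + 1) ω = ∑ i ∈ Finset.range (Z n ω), Lfam (n + 1) i ω)
    (n : ℕ) (s : ℝ≥0∞) :
    ∫⁻ ω, s ^ Z n ω ∂P = (Fg (fun j => P (L ⁻¹' {j})))^[n] s := by
  induction n generalizing s with
  | zero =>
    simp only [Function.iterate_zero, id_eq]
    calc ∫⁻ ω, s ^ Z 0 ω ∂P = ∫⁻ _, s ∂P := by
          congr 1; funext ω; rw [hZ0 ω, pow_one]
      _ = s := by simp
  | succ n ih =>
    rw [gw_step Lfam Z hmL hmLfam hindep hid hZ0 hZrec n s,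
      ih (Fg (fun j => P (L ⁻¹' {j})) s), ← Function.iterate_succ_apply]


lemma tsum_iSup_nat {f : ℕ → ℕ → ℝ≥0∞} (hmono : ∀ k, Monotone (f k)) :
    ∑' k, ⨆ n, f k n = ⨆ n, ∑' k, f k n := by
  have h2 : ∑' k, ⨆ n, f k n = ∫⁻ k, ⨆ n, f k n ∂(Measure.count) :=
    (lintegral_count _).symm
  rw [h2, lintegral_iSup (fun n => measurable_of_countable _)
    (fun a b hab k => hmono k hab)]
  exact iSup_congr fun n => lintegral_count _

variable {Ω : Type*} [MeasurableSpace Ω] {P : Measure Ω}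

lemma tsum_p_eq_one [IsProbabilityMeasure P] {X : Ω → ℕ} (hX : Measurable X) :
    ∑' k, P (X ⁻¹' {k}) = 1 := by
  rw [← measure_iUnion (fun i j hij => (Set.disjoint_singleton.2 hij).preimage X)
    (fun k => hX (measurableSet_singleton k))]
  have : ⋃ k, X ⁻¹' {k} = Set.univ := by ext ω; simp
  rw [this, measure_univ]

lemma mean_eq_one [IsProbabilityMeasure P] {L : Ω → ℕ} (hmL : Measurable L)
    (hmean : ∫ ω, (L ω : ℝ) ∂P = 1) :
    ∑' k, P (L ⁻¹' {k}) * k = 1 := by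
  have hInt : Integrable (fun ω => (L ω : ℝ)) P := by
    by_contra h
    rw [integral_undef h] at hmean
    exact one_ne_zero hmean.symm
  have h1 : ∫⁻ ω, ((L ω : ℝ≥0∞)) ∂P = 1 := by
    have h := ofReal_integral_eq_lintegral_ofReal hInt
      (Filter.Eventually.of_forall fun ω => Nat.cast_nonneg _)
    rw [hmean, ENNReal.ofReal_one] at h
    calc ∫⁻ ω, ((L ω : ℝ≥0∞)) ∂P
        = ∫⁻ ω, ENNReal.ofReal (L ω : ℝ) ∂P :=
          lintegral_congr fun ω => (ENNReal.ofReal_natCast (L ω)).symm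
      _ = 1 := h.symm
  rw [comp_eval hmL (fun k : ℕ => (k : ℝ≥0∞))] at h1
  exact h1

lemma sq_eq_top [IsProbabilityMeasure P] {L : Ω → ℕ} (hmL : Measurable L)
    (hL2 : ∫⁻ ω, (L ω : ℝ≥0∞) ^ 2 ∂P = ⊤) :
    ∑' k, P (L ⁻¹' {k}) * (k : ℝ≥0∞) ^ 2 = ⊤ := by
  rw [comp_eval hmL (fun k : ℕ => (k : ℝ≥0∞) ^ 2)] at hL2
  exact hL2

lemma Phi_one_top {p : ℕ → ℝ≥0∞} (hpm : ∑' k, p k * k = 1)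
    (hp2 : ∑' k, p k * (k : ℝ≥0∞) ^ 2 = ⊤) : Phi p 1 = ⊤ := by
  have hBq : ∀ k : ℕ, Bq 1 k = ((∑ i ∈ range k, i : ℕ) : ℝ≥0∞) := by
    intro k
    rw [Bq, Nat.cast_sum]
    congr 1; funext i
    simp [Aq]
  have hk2 : ∀ k : ℕ, (k : ℝ≥0∞) ^ 2 = 2 * Bq 1 k + k := by
    intro k
    rw [hBq]
    have hnat : k ^ 2 = 2 * (∑ i ∈ range k, i) + k := by
      have h2 := Finset.sum_range_id_mul_two k
      cases k with
      | zero => simp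
      | succ m =>
        have h3 : (∑ i ∈ range (m + 1), i) * 2 = (m + 1) * m := by
          rw [h2]; simp
        have h4 : (m + 1) ^ 2 = (m + 1) * m + (m + 1) := by ring
        rw [h4, ← h3]; ring
    calc (k : ℝ≥0∞) ^ 2 = ((k ^ 2 : ℕ) : ℝ≥0∞) := by push_cast; ring
      _ = ((2 * (∑ i ∈ range k, i) + k : ℕ) : ℝ≥0∞) := by rw [hnat]
      _ = 2 * ((∑ i ∈ range k, i : ℕ) : ℝ≥0∞) + k := by push_cast; ring
  have hsplit : ∑' k, p k * (k : ℝ≥0∞) ^ 2 = 2 * Phi p 1 + 1 := by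
    calc ∑' k, p k * (k : ℝ≥0∞) ^ 2
        = ∑' k, (2 * (p k * Bq 1 k) + p k * k) := by
          congr 1; funext k; rw [hk2]; ring
      _ = 2 * Phi p 1 + 1 := by
          rw [ENNReal.tsum_add, ENNReal.tsum_mul_left, hpm, Phi]
  by_contra h
  rw [hsplit] at hp2
  exact (ENNReal.add_ne_top.2 ⟨ENNReal.mul_ne_top (by norm_num) h, ENNReal.one_ne_top⟩) hp2

lemma exists_k0 {p : ℕ → ℝ≥0∞} (htop : Phi p 1 = ⊤) :
    ∃ k₀, 2 ≤ k₀ ∧ p k₀ ≠ 0 := by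
  by_contra h
  push_neg at h
  have : Phi p 1 = 0 := by
    rw [Phi]
    convert tsum_zero with k
    rcases Nat.lt_or_ge k 2 with hk | hk
    · have : Bq 1 k = 0 := by
        interval_cases k <;> simp [Bq, Aq]
      rw [this, mul_zero]
    · rw [h k hk, zero_mul]
  rw [this] at htop
  exact ENNReal.zero_ne_top htop

end GW5

/-- For a critical Galton–Watson process with `E[L] = 1` and `E[L²] = ∞`,
one has `n · P[Z n > 0] → 0`. -/
theorem stmt_5
    {Ω : Type*} [MeasurableSpace Ω] (P : Measure Ω) [IsProbabilityMeasure P]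
    (L : Ω → ℕ) (Lfam : ℕ → ℕ → Ω → ℕ) (Z : ℕ → Ω → ℕ)
    (hmL : Measurable L) (hmLfam : ∀ n i, Measurable (Lfam n i))
    (hindep : iIndepFun (fun p : ℕ × ℕ => Lfam p.1 p.2) P)
    (hid : ∀ n i, Measure.map (Lfam n i) P = Measure.map L P)
    (hZ0 : ∀ ω, Z 0 ω = 1)
    (hZrec : ∀ n ω, Z (n + 1) ω = ∑ i ∈ Finset.range (Z n ω), Lfam (n + 1) i ω)
    (hmean : ∫ ω, (L ω : ℝ) ∂P = 1)
    (hL2 : ∫⁻ ω, (L ω : ℝ≥0∞) ^ 2 ∂P = ⊤) :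
    Tendsto (fun n : ℕ => (n : ℝ) * (P {ω | 0 < Z n ω}).toReal) atTop (nhds 0) := by
  classical
  set p : ℕ → ℝ≥0∞ := fun j => P (L ⁻¹' {j}) with hpdef
  have hp1 : ∑' k, p k = 1 := GW5.tsum_p_eq_one hmL
  have hpm : ∑' k, p k * k = 1 := GW5.mean_eq_one hmL hmean
  have hΦtop : GW5.Phi p 1 = ⊤ := GW5.Phi_one_top hpm (GW5.sq_eq_top hmL hL2)
  obtain ⟨k₀, hk₀, hpk₀⟩ := GW5.exists_k0 hΦtop
  set u : ℕ → ℝ≥0∞ := fun n => (GW5.Fg p)^[n] 0 with hudef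
  have hu_succ : ∀ n, u (n + 1) = GW5.Fg p (u n) := fun n =>
    Function.iterate_succ_apply' (GW5.Fg p) n 0
  have hu_le1 : ∀ n, u n ≤ 1 := by
    intro n; induction n with
    | zero => exact zero_le
    | succ n ih => rw [hu_succ]; exact GW5.Fg_le_one hp1 ih
  have hu_lt1 : ∀ n, u n < 1 := by
    intro n; induction n with
    | zero => exact zero_lt_one
    | succ n ih => rw [hu_succ]; exact GW5.Fg_lt_one hp1 hk₀ hpk₀ ih
  have humono : Monotone u := by
    apply monotone_nat_of_le_succ
    intro n
    induction n with
    | zero => exact zero_le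
    | succ n ih => rw [hu_succ, hu_succ]; exact GW5.Fg_mono ih
  have hZmeas : ∀ n, Measurable (Z n) :=
    fun n => ((GW5.measurable_Z_GS Lfam Z hmLfam hZ0 hZrec n).mono
      (GW5.GS_le Lfam hmLfam _) le_rfl)
  set a : ℕ → ℝ≥0∞ := fun n => 1 - u n with hadef
  have hProb : ∀ n, P {ω | 0 < Z n ω} = a n := by
    intro n
    have h0 : P (Z n ⁻¹' {0}) = u n := by
      have hci := GW5.comp_eval (P := P) (hZmeas n) (fun k => (0 : ℝ≥0∞) ^ k)
      have hgw := GW5.gw_iterate Lfam Z hmL hmLfam hindep hid hZ0 hZrec n 0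
      have hone : P (Z n ⁻¹' {0}) = ∑' k, P (Z n ⁻¹' {k}) * (0 : ℝ≥0∞) ^ k := by
        rw [tsum_eq_single 0 (fun k hk => by rw [zero_pow hk, mul_zero])]
        simp
      calc P (Z n ⁻¹' {0}) = ∑' k, P (Z n ⁻¹' {k}) * (0 : ℝ≥0∞) ^ k := hone
        _ = ∫⁻ ω, (0 : ℝ≥0∞) ^ Z n ω ∂P := hci.symm
        _ = u n := hgw
    have hset : {ω | 0 < Z n ω} = (Z n ⁻¹' {0})ᶜ := by
      ext ω; simp [Nat.pos_iff_ne_zero]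
    rw [hset, prob_compl_eq_one_sub (hZmeas n (measurableSet_singleton 0)), h0]
  have ha_pos : ∀ n, a n ≠ 0 := fun n => (tsub_pos_of_lt (hu_lt1 n)).ne'
  have ha_le1 : ∀ n, a n ≤ 1 := fun n => tsub_le_self
  have ha_fin : ∀ n, a n ≠ ⊤ := fun n => ((ha_le1 n).trans_lt ENNReal.one_lt_top).ne
  have key1 : ∀ n, a (n + 1) = a n * GW5.Psi p (u n) := by
    intro n
    have hFle : GW5.Fg p (u n) ≤ 1 := GW5.Fg_le_one hp1 (hu_le1 n)
    have hkey : (1 : ℝ≥0∞) - GW5.Fg p (u n) = (1 - u n) * GW5.Psi p (u n) :=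
      ENNReal.sub_eq_of_eq_add (hFle.trans_lt ENNReal.one_lt_top).ne
        (by rw [add_comm]; exact (GW5.Fg_add_Psi hp1 (hu_le1 n)).symm)
    show (1 : ℝ≥0∞) - u (n + 1) = (1 - u n) * GW5.Psi p (u n)
    rw [hu_succ n, hkey]
  have key2 : ∀ n, GW5.Psi p (u n) + a n * GW5.Phi p (u n) = 1 :=
    fun n => GW5.Psi_add_Phi hpm (hu_le1 n)
  have hinv : ∀ n, (a n)⁻¹ + GW5.Phi p (u n) ≤ (a (n + 1))⁻¹ := by
    intro n
    rw [ENNReal.le_inv_iff_mul_le]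
    have hPsi_le1 : GW5.Psi p (u n) ≤ 1 := by
      rw [← key2 n]; exact le_self_add
    have ha1_le : a (n + 1) ≤ a n := by
      rw [key1 n]
      calc a n * GW5.Psi p (u n) ≤ a n * 1 := mul_le_mul_right hPsi_le1 _
        _ = a n := mul_one _
    calc ((a n)⁻¹ + GW5.Phi p (u n)) * a (n + 1)
        = (a n)⁻¹ * a (n + 1) + GW5.Phi p (u n) * a (n + 1) := add_mul _ _ _
      _ ≤ (a n)⁻¹ * a (n + 1) + GW5.Phi p (u n) * a n :=
          add_le_add_right (mul_le_mul_right ha1_le _) _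
      _ = GW5.Psi p (u n) + a n * GW5.Phi p (u n) := by
          rw [key1 n, ← mul_assoc, ENNReal.inv_mul_cancel (ha_pos n) (ha_fin n),
            one_mul, mul_comm]
      _ = 1 := key2 n
  have hsumΦ : ∀ n, ∑ j ∈ Finset.range n, GW5.Phi p (u j) ≤ (a n)⁻¹ := by
    intro n
    induction n with
    | zero => simp
    | succ n ih =>
      rw [Finset.sum_range_succ]
      calc ∑ j ∈ Finset.range n, GW5.Phi p (u j) + GW5.Phi p (u n)
          ≤ (a n)⁻¹ + GW5.Phi p (u n) := add_le_add_left ih _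
        _ ≤ (a (n + 1))⁻¹ := hinv n
  set S : ℝ≥0∞ := ⨆ n, u n with hSdef
  have htendu : Tendsto u atTop (nhds S) := tendsto_atTop_iSup humono
  have hcomp : ∀ g : ℝ≥0∞ → ℝ≥0∞, Monotone g → Continuous g →
      ⨆ n, g (u n) = g S := fun g hg hc =>
    iSup_eq_of_tendsto (hg.comp humono) ((hc.tendsto S).comp htendu)
  have hS_le1 : S ≤ 1 := iSup_le fun n => hu_le1 n
  have hS1 : S = 1 := by
    by_contra hne
    have hSlt : S < 1 := lt_of_le_of_ne hS_le1 hne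
    have hSfin : S ≠ ⊤ := (hSlt.trans ENNReal.one_lt_top).ne
    have hFS : GW5.Fg p S = S := by
      have h1 : GW5.Fg p S = ⨆ n, GW5.Fg p (u n) := by
        rw [GW5.Fg]
        have hper : ∀ k : ℕ, p k * S ^ k = ⨆ n, p k * u n ^ k := fun k =>
          (hcomp (fun s => p k * s ^ k)
            (fun s t hst => mul_le_mul_right (pow_le_pow_left' hst k) _)
            ((ENNReal.continuous_const_mul (measure_ne_top P _)).comp
              (ENNReal.continuous_pow k))).symm
        calc ∑' k, p k * S ^ k = ∑' k, ⨆ n, p k * u n ^ k := by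
              congr 1; funext k; exact hper k
          _ = ⨆ n, ∑' k, p k * u n ^ k :=
              GW5.tsum_iSup_nat (fun k m l hml =>
                mul_le_mul_right (pow_le_pow_left' (humono hml) k) _)
          _ = ⨆ n, GW5.Fg p (u n) := rfl
      rw [h1]
      have h2 : ∀ n, GW5.Fg p (u n) = u (n + 1) := fun n => (hu_succ n).symm
      calc ⨆ n, GW5.Fg p (u n) = ⨆ n, u (n + 1) := iSup_congr h2
        _ = S := le_antisymm (iSup_le fun n => le_iSup u (n + 1))
            (iSup_le fun n => (humono (Nat.le_succ n)).trans
              (le_iSup (fun m => u (m + 1)) n))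
    set A : ℝ≥0∞ := 1 - S with hAdef
    have hA0 : A ≠ 0 := (tsub_pos_of_lt hSlt).ne'
    have hAfin : A ≠ ⊤ := (tsub_le_self.trans_lt ENNReal.one_lt_top).ne
    have hsplit := GW5.Fg_add_Psi hp1 hS_le1
    rw [hFS] at hsplit
    have hSA : S + A = 1 := add_tsub_cancel_of_le hS_le1
    have hPsi1 : GW5.Psi p S = 1 := by
      have hAP : A * GW5.Psi p S = A :=
        (ENNReal.add_right_inj hSfin).1 (hsplit.trans hSA.symm)
      calc GW5.Psi p S = (A⁻¹ * A) * GW5.Psi p S := by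
            rw [ENNReal.inv_mul_cancel hA0 hAfin, one_mul]
        _ = A⁻¹ * (A * GW5.Psi p S) := mul_assoc _ _ _
        _ = A⁻¹ * A := by rw [hAP]
        _ = 1 := ENNReal.inv_mul_cancel hA0 hAfin
    have hsplit2 := GW5.Psi_add_Phi hpm hS_le1
    rw [hPsi1] at hsplit2
    have hzero : A * GW5.Phi p S = 0 := by
      have h10 : (1 : ℝ≥0∞) + A * GW5.Phi p S = 1 + 0 := by
        rw [add_zero]; exact hsplit2
      exact (ENNReal.add_right_inj ENNReal.one_ne_top).1 h10
    rcases mul_eq_zero.1 hzero with h | h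
    · exact hA0 h
    · exact hpk₀ (le_antisymm (h ▸ GW5.Phi_pos hk₀ hpk₀ S) (zero_le))
  have hBqc : ∀ k, Continuous fun s : ℝ≥0∞ => GW5.Bq s k := by
    intro k
    simp only [GW5.Bq, GW5.Aq]
    exact continuous_finset_sum _ fun i _ =>
      continuous_finset_sum _ fun j _ => ENNReal.continuous_pow j
  have hPhisup : ⨆ n, GW5.Phi p (u n) = ⊤ := by
    have h1 : GW5.Phi p S = ⨆ n, GW5.Phi p (u n) := by
      rw [GW5.Phi]
      have hper : ∀ k : ℕ, p k * GW5.Bq S k = ⨆ n, p k * GW5.Bq (u n) k := fun k =>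
        (hcomp (fun s => p k * GW5.Bq s k)
          (fun s t hst => mul_le_mul_right
            (Finset.sum_le_sum fun i _ => GW5.Aq_mono i hst) _)
          ((ENNReal.continuous_const_mul (measure_ne_top P _)).comp (hBqc k))).symm
      calc ∑' k, p k * GW5.Bq S k = ∑' k, ⨆ n, p k * GW5.Bq (u n) k := by
            congr 1; funext k; exact hper k
        _ = ⨆ n, ∑' k, p k * GW5.Bq (u n) k :=
            GW5.tsum_iSup_nat (fun k m l hml => mul_le_mul_right
              (Finset.sum_le_sum fun i _ => GW5.Aq_mono i (humono hml)) _)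
        _ = ⨆ n, GW5.Phi p (u n) := rfl
    rw [← h1, hS1]
    exact hΦtop
  -- final epsilon argument
  rw [Metric.tendsto_atTop]
  intro ε hε
  set M : ℝ≥0∞ := ENNReal.ofReal (4 / ε) with hMdef
  have hMfin : M < ⊤ := ENNReal.ofReal_lt_top
  have hM0 : M ≠ 0 := (ENNReal.ofReal_pos.2 (by positivity)).ne'
  obtain ⟨n₀, hn₀⟩ : ∃ n₀, M < GW5.Phi p (u n₀) := by
    have : M < ⨆ n, GW5.Phi p (u n) := by rw [hPhisup]; exact hMfin
    exact lt_iSup_iff.1 this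
  refine ⟨2 * n₀ + 2, fun n hn => ?_⟩
  have hn₀n : n₀ < n := by omega
  have hlow : (n - n₀ : ℕ) • M ≤ (a n)⁻¹ := by
    calc (n - n₀ : ℕ) • M = (Finset.Ico n₀ n).card • M := by rw [Nat.card_Ico]
      _ ≤ ∑ j ∈ Finset.Ico n₀ n, GW5.Phi p (u j) :=
          Finset.card_nsmul_le_sum _ _ _ (fun j hj =>
            hn₀.le.trans (GW5.Phi_mono (humono (Finset.mem_Ico.1 hj).1)))
      _ ≤ ∑ j ∈ Finset.range n, GW5.Phi p (u j) :=
          Finset.sum_le_sum_of_subset (by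
            intro j hj
            simp only [Finset.mem_Ico] at hj
            simp only [Finset.mem_range]
            omega)
      _ ≤ (a n)⁻¹ := hsumΦ n
  have hainv : a n ≤ ((n - n₀ : ℕ) • M)⁻¹ := by
    calc a n = ((a n)⁻¹)⁻¹ := (inv_inv _).symm
      _ ≤ ((n - n₀ : ℕ) • M)⁻¹ := ENNReal.inv_le_inv' hlow
  have hc0 : ((n - n₀ : ℕ) • M) ≠ 0 := by
    rw [nsmul_eq_mul]
    exact mul_ne_zero (Nat.cast_ne_zero.2 (by omega)) hM0
  have htrb : (a n).toReal ≤ (((n - n₀ : ℕ) • M)⁻¹).toReal :=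
    ENNReal.toReal_mono (ENNReal.inv_ne_top.2 hc0) hainv
  have hval : (((n - n₀ : ℕ) • M)⁻¹).toReal = (((n - n₀ : ℕ) : ℝ) * (4 / ε))⁻¹ := by
    rw [ENNReal.toReal_inv, nsmul_eq_mul, ENNReal.toReal_mul, ENNReal.toReal_natCast,
      hMdef, ENNReal.toReal_ofReal (by positivity)]
  rw [dist_zero_right, Real.norm_eq_abs,
    abs_of_nonneg (by positivity)]
  have hq : ((n - n₀ : ℕ) : ℝ) = (n : ℝ) - (n₀ : ℝ) := by
    rw [Nat.cast_sub hn₀n.le]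
  have hqpos : (0 : ℝ) < ((n - n₀ : ℕ) : ℝ) := by
    rw [hq]
    have : (n₀ : ℝ) + 1 ≤ (n : ℝ) := by exact_mod_cast hn₀n
    linarith
  have h2n : (n : ℝ) ≤ 2 * ((n - n₀ : ℕ) : ℝ) := by
    rw [hq]
    have : (2 * n₀ + 2 : ℝ) ≤ (n : ℝ) := by exact_mod_cast hn
    linarith
  have hbound : (n : ℝ) * (((n - n₀ : ℕ) : ℝ) * (4 / ε))⁻¹ ≤ ε / 2 := by
    have hden : (0 : ℝ) < ((n - n₀ : ℕ) : ℝ) * (4 / ε) := by positivity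
    rw [← div_eq_mul_inv, div_le_iff₀ hden]
    have heq : ε / 2 * (((n - n₀ : ℕ) : ℝ) * (4 / ε)) = 2 * ((n - n₀ : ℕ) : ℝ) := by
      field_simp; ring
    rw [heq]
    exact h2n
  calc (n : ℝ) * (P {ω | 0 < Z n ω}).toReal
      = (n : ℝ) * (a n).toReal := by rw [hProb n]
    _ ≤ (n : ℝ) * (((n - n₀ : ℕ) : ℝ) * (4 / ε))⁻¹ := by
        apply mul_le_mul_of_nonneg_left (htrb.trans_eq hval) (Nat.cast_nonneg n)
    _ ≤ ε / 2 := hbound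
    _ < ε := by linarith
end

section
/- Let L be an ℕ-valued random variable with E[L] = 1 and P[L = 1] < 1, and let (Z^{(i)}_n)_{n ≥ 0}, i = 1, 2, …, be i.i.d. Galton–Watson processes with offspring variable L. Let Y be an integer-valued random variable with Y ≥ 1, independent of the processes, and let V be a random index which, conditionally on Y, is uniformly distributed on {1, …, Y} and independent of the processes. Define B_n := {∃ i with 1 ≤ i < V and Z^{(i)}_n > 0} and r_n := ∑_{i=V+1}^{Y} Z^{(i)}_n, and set β_n := P[B_n], α_n := E[r_n · 1_{B_n}]. Then β_n → 0 as n → ∞, and if moreover E[Y] < ∞, then α_n → 0 as n → ∞. -/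
open MeasureTheory ProbabilityTheory Filter
open scoped ENNReal

section GWhelp

variable {Ω : Type*} [MeasurableSpace Ω] {P : Measure Ω} [IsProbabilityMeasure P]

private lemma lintegral_comp_countable {γ : Type*} [Countable γ] [MeasurableSpace γ]
    [MeasurableSingletonClass γ] {X : Ω → γ} (hX : Measurable X) (g : γ → ℝ≥0∞) :
    ∫⁻ ω, g (X ω) ∂P = ∑' c, g c * P {ω | X ω = c} := by
  rw [← lintegral_map (measurable_of_countable g) hX, lintegral_countable']
  refine tsum_congr fun c => ?_
  rw [Measure.map_apply hX (measurableSet_singleton c)]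
  rfl

private lemma lintegral_partition {γ : Type*} [Countable γ] [MeasurableSpace γ]
    [MeasurableSingletonClass γ] {X : Ω → γ} (hX : Measurable X) {f : Ω → ℝ≥0∞}
    (hf : Measurable f) :
    ∫⁻ ω, f ω ∂P = ∑' c, ∫⁻ ω, ({ω' | X ω' = c}.indicator 1 ω) * f ω ∂P := by
  have hpt : ∀ ω, f ω = ∑' c, ({ω' | X ω' = c}.indicator 1 ω) * f ω := by
    intro ω
    rw [tsum_eq_single (X ω) (fun c hc => by
      have hω : ω ∉ {ω' | X ω' = c} := fun h => hc (Eq.symm h)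
      simp [Set.indicator_of_notMem hω])]
    rw [Set.indicator_of_mem (show ω ∈ {ω' | X ω' = X ω} from rfl)]
    simp
  calc ∫⁻ ω, f ω ∂P = ∫⁻ ω, ∑' c, ({ω' | X ω' = c}.indicator 1 ω) * f ω ∂P :=
        lintegral_congr hpt
    _ = ∑' c, ∫⁻ ω, ({ω' | X ω' = c}.indicator 1 ω) * f ω ∂P :=
        lintegral_tsum fun c =>
          ((measurable_const.indicator (hX (measurableSet_singleton c))).mul hf).aemeasurable

private lemma ennreal_bern1 {s t : ℝ≥0∞} (hst : s + t = 1) (k : ℕ) :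
    1 ≤ s ^ k + k * t := by
  have hs1 : s ≤ 1 := hst ▸ le_add_right le_rfl
  induction k with
  | zero => simp
  | succ k ih =>
      calc (1:ℝ≥0∞) = s * 1 + t := by rw [mul_one, hst]
        _ ≤ s * (s ^ k + k * t) + t := by gcongr
        _ = s ^ (k+1) + (s * (k * t) + t) := by ring
        _ ≤ s ^ (k+1) + (1 * (k * t) + t) := by gcongr
        _ = s ^ (k+1) + (k + 1 : ℕ) * t := by push_cast; ring

private lemma ennreal_bern2 {s t : ℝ≥0∞} (hst : s + t = 1) {k : ℕ} (hk : 2 ≤ k) :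
    1 + t ^ 2 ≤ s ^ k + k * t := by
  induction k, hk using Nat.le_induction with
  | base =>
      have : s ^ 2 + (2:ℕ) * t = 1 + t ^ 2 := by
        calc s ^ 2 + (2:ℕ) * t = s ^ 2 + 2 * t * (s + t) := by rw [hst]; push_cast; ring
          _ = (s + t) ^ 2 + t ^ 2 := by ring
          _ = 1 + t ^ 2 := by rw [hst]; ring
      exact this.ge
  | succ k hk ih =>
      have h2k : (2:ℝ≥0∞) ≤ (k:ℝ≥0∞) := by exact_mod_cast hk
      calc (1:ℝ≥0∞) + t ^ 2 ≤ 1 + (s * t ^ 2 + 2 * t ^ 2) := by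
            refine add_le_add_right ?_ 1
            calc t ^ 2 ≤ 2 * t ^ 2 := by rw [two_mul]; exact le_self_add
              _ ≤ s * t ^ 2 + 2 * t ^ 2 := le_add_self
        _ = (s + t) + (s * t ^ 2 + 2 * t ^ 2) := by rw [hst]
        _ = s * (1 + t ^ 2) + (t * (2 * t) + t) := by ring
        _ ≤ s * (s ^ k + k * t) + (t * (k * t) + t) := by gcongr
        _ = s ^ (k+1) + (k * t) * (s + t) + t := by ring
        _ = s ^ (k+1) + (k + 1 : ℕ) * t := by rw [hst]; push_cast; ring

end GWhelp


set_option maxHeartbeats 2000000 in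
/-- The lemma on i.i.d. critical Galton–Watson forests: with `Y ≥ 1` initial
particles, `V` uniform on `{1, …, Y}` given `Y`, `(Y, V)` independent of the
processes, `B n` the event that some process strictly to the left of `V`
survives to generation `n`, and `r n` the number of generation-`n` particles in
the processes strictly to the right of `V`, one has `β n := P[B n] → 0`, and if
moreover `E[Y] < ∞`, then `α n := E[r n · 1_{B n}] → 0`. -/
theorem stmt_10
    {Ω : Type*} [MeasurableSpace Ω] (P : Measure Ω) [IsProbabilityMeasure P]
    (L : Ω → ℕ) (Lfam : ℕ → ℕ → ℕ → Ω → ℕ) (Zs : ℕ → ℕ → Ω → ℕ)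
    (Y V : Ω → ℕ)
    (hmL : Measurable L) (hmLfam : ∀ i n j, Measurable (Lfam i n j))
    (hmY : Measurable Y) (hmV : Measurable V)
    -- the underlying offspring variables of all the processes are i.i.d. with law `L`:
    (hindep : iIndepFun
      (fun p : ℕ × ℕ × ℕ => Lfam p.1 p.2.1 p.2.2) P)
    (hid : ∀ i n j, Measure.map (Lfam i n j) P = Measure.map L P)
    -- each `Zs i` is the Galton–Watson process built from the `i`-th array:
    (hZ0 : ∀ i ω, Zs i 0 ω = 1)
    (hZrec : ∀ i n ω,
      Zs i (n + 1) ω = ∑ j ∈ Finset.range (Zs i n ω), Lfam i (n + 1) j ω)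
    -- criticality:
    (hLint : Integrable (fun ω => (L ω : ℝ)) P)
    (hmean : ∫ ω, (L ω : ℝ) ∂P = 1)
    (hnotdet : P {ω | L ω = 1} < 1)
    -- `(Y, V)` is independent of the family of processes:
    (hindepYV : IndepFun (fun ω => (Y ω, V ω))
      (fun ω => fun p : ℕ × ℕ × ℕ => Lfam p.1 p.2.1 p.2.2 ω) P)
    -- `Y ≥ 1`, `1 ≤ V ≤ Y`, and `V` is conditionally uniform on `{1, …, Y}`:
    (hY1 : ∀ᵐ ω ∂P, 1 ≤ Y ω)
    (hVrange : ∀ᵐ ω ∂P, 1 ≤ V ω ∧ V ω ≤ Y ω)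
    (hunif : ∀ y v : ℕ, 1 ≤ v → v ≤ y →
      P ({ω | V ω = v} ∩ {ω | Y ω = y}) = P {ω | Y ω = y} / y)
    -- the events `B n` and counts `r n`:
    (B : ℕ → Set Ω) (r : ℕ → Ω → ℕ)
    (hB : ∀ n, B n = {ω | ∃ i, 1 ≤ i ∧ i < V ω ∧ 0 < Zs i n ω})
    (hr : ∀ n ω, r n ω = ∑ i ∈ Finset.Ioc (V ω) (Y ω), Zs i n ω) :
    Tendsto (fun n => P (B n)) atTop (nhds 0) ∧
    ((∫⁻ ω, (Y ω : ℝ≥0∞) ∂P < ⊤) →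
      Tendsto (fun n => ∫⁻ ω in B n, (r n ω : ℝ≥0∞) ∂P) atTop (nhds 0)) := by
  classical
  set mG : Set (ℕ × ℕ × ℕ) → MeasurableSpace Ω := fun S =>
    ⨆ p ∈ S, MeasurableSpace.comap (Lfam p.1 p.2.1 p.2.2) inferInstance with hmG
  have hGle : ∀ S, mG S ≤ (inferInstance : MeasurableSpace Ω) := fun S =>
    iSup₂_le fun p _ => measurable_iff_comap_le.mp (hmLfam p.1 p.2.1 p.2.2)
  have hGmono : ∀ {S T}, S ⊆ T → mG S ≤ mG T := fun {S T} h =>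
    biSup_mono h
  have hGindep : ∀ S T, Disjoint S T → Indep (mG S) (mG T) P := fun S T h =>
    indep_iSup_of_disjoint (m := fun p : ℕ × ℕ × ℕ => MeasurableSpace.comap (Lfam p.1 p.2.1 p.2.2) inferInstance) (fun p => measurable_iff_comap_le.mp (hmLfam p.1 p.2.1 p.2.2))
      hindep.iIndep h
  have hmeasLp : ∀ p : ℕ × ℕ × ℕ, ∀ S, p ∈ S → Measurable[mG S] (Lfam p.1 p.2.1 p.2.2) :=
    fun p S hp => (Measurable.of_comap_le le_rfl).mono (le_iSup₂ (f := fun p _ =>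
      MeasurableSpace.comap (Lfam p.1 p.2.1 p.2.2) inferInstance) p hp) le_rfl
  have hmeasZ : ∀ i n, Measurable[mG {p | p.1 = i ∧ p.2.1 ≤ n}] (Zs i n) := by
    intro i n
    induction n with
    | zero =>
        have : Zs i 0 = fun _ => 1 := funext (hZ0 i)
        rw [this]; exact measurable_const
    | succ n ih =>
        refine @measurable_to_countable' ℕ Ω _ _ (mG {p | p.1 = i ∧ p.2.1 ≤ n+1}) _ fun m => ?_
        have hset : (Zs i (n+1)) ⁻¹' {m} =
            ⋃ k, ((Zs i n) ⁻¹' {k} ∩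
              {ω | ∑ j ∈ Finset.range k, Lfam i (n+1) j ω = m}) := by
          ext ω
          simp only [Set.mem_preimage, Set.mem_singleton_iff, Set.mem_iUnion, Set.mem_inter_iff,
            Set.mem_setOf_eq, hZrec i n ω]
          exact ⟨fun h => ⟨Zs i n ω, rfl, h⟩, fun ⟨k, hk, h⟩ => by rw [hk]; exact h⟩
        rw [hset]
        refine MeasurableSet.iUnion fun k => MeasurableSet.inter ?_ ?_
        · exact (ih.mono (hGmono (show {p : ℕ×ℕ×ℕ | p.1 = i ∧ p.2.1 ≤ n} ⊆ {p | p.1 = i ∧ p.2.1 ≤ n+1} from fun p hp => ⟨hp.1, hp.2.trans (Nat.le_succ n)⟩)) le_rfl)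
            (measurableSet_singleton k)
        · have hsum : Measurable[mG {p | p.1 = i ∧ p.2.1 ≤ n+1}]
              (fun ω => ∑ j ∈ Finset.range k, Lfam i (n+1) j ω) :=
            Finset.measurable_sum _ fun j _ => hmeasLp (i, n+1, j) _ ⟨rfl, le_rfl⟩
          exact hsum (measurableSet_singleton m)
  have hmeasZ0 : ∀ i n, Measurable (Zs i n) := fun i n => (hmeasZ i n).mono (hGle _) le_rfl
  have hmul2 : ∀ (S T : Set (ℕ × ℕ × ℕ)), Disjoint S T → ∀ f g : Ω → ℝ≥0∞,
      Measurable[mG S] f → Measurable[mG T] g →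
      ∫⁻ ω, f ω * g ω ∂P = (∫⁻ ω, f ω ∂P) * ∫⁻ ω, g ω ∂P :=
    fun S T h f g hf hg =>
      lintegral_mul_eq_lintegral_mul_lintegral_of_independent_measurableSpace
        (hGle S) (hGle T) (hGindep S T h) hf hg
  have hsplit : ∀ (S : Set (ℕ × ℕ × ℕ)) (fA : Ω → ℝ≥0∞), Measurable[mG S] fA →
      ∀ (T : Finset (ℕ × ℕ × ℕ)), (∀ t ∈ T, t ∉ S) → ∀ g : (ℕ × ℕ × ℕ) → ℕ → ℝ≥0∞,
      ∫⁻ ω, fA ω * ∏ t ∈ T, g t (Lfam t.1 t.2.1 t.2.2 ω) ∂P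
        = (∫⁻ ω, fA ω ∂P) * ∏ t ∈ T, ∫⁻ ω, g t (Lfam t.1 t.2.1 t.2.2 ω) ∂P := by
    intro S fA hfA T
    induction T using Finset.induction_on with
    | empty => simp
    | insert _ _ ha =>
        rename_i a T ih0
        intro hTS g
        have haS : a ∉ S ∪ ↑T := by
          simp only [Set.mem_union, Finset.mem_coe]
          rintro (h | h)
          · exact hTS a (Finset.mem_insert_self a T) h
          · exact ha h
        have hmeas1 : Measurable[mG (S ∪ ↑T)]
            (fun ω => fA ω * ∏ t ∈ T, g t (Lfam t.1 t.2.1 t.2.2 ω)) :=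
          (hfA.mono (hGmono Set.subset_union_left) le_rfl).mul
            (Finset.measurable_prod _ fun t ht =>
              (measurable_of_countable (g t)).comp
                (hmeasLp t _ (Set.mem_union_right _ (Finset.mem_coe.mpr ht))))
        have hmeas2 : Measurable[mG {a}]
            (fun ω => g a (Lfam a.1 a.2.1 a.2.2 ω)) :=
          (measurable_of_countable (g a)).comp (hmeasLp a _ rfl)
        calc ∫⁻ ω, fA ω * ∏ t ∈ insert a T, g t (Lfam t.1 t.2.1 t.2.2 ω) ∂P
            = ∫⁻ ω, (fA ω * ∏ t ∈ T, g t (Lfam t.1 t.2.1 t.2.2 ω)) *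
                g a (Lfam a.1 a.2.1 a.2.2 ω) ∂P := by
              refine lintegral_congr fun ω => ?_
              rw [Finset.prod_insert ha]; ring
          _ = (∫⁻ ω, fA ω * ∏ t ∈ T, g t (Lfam t.1 t.2.1 t.2.2 ω) ∂P) *
                ∫⁻ ω, g a (Lfam a.1 a.2.1 a.2.2 ω) ∂P :=
              hmul2 _ _ (Set.disjoint_singleton_right.mpr haS) _ _ hmeas1 hmeas2
          _ = ((∫⁻ ω, fA ω ∂P) * ∏ t ∈ T, ∫⁻ ω, g t (Lfam t.1 t.2.1 t.2.2 ω) ∂P) *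
                ∫⁻ ω, g a (Lfam a.1 a.2.1 a.2.2 ω) ∂P := by
              rw [ih0 (fun t ht => hTS t (Finset.mem_insert_of_mem ht)) g]
          _ = (∫⁻ ω, fA ω ∂P) * ∏ t ∈ insert a T, ∫⁻ ω, g t (Lfam t.1 t.2.1 t.2.2 ω) ∂P := by
              rw [Finset.prod_insert ha]; ring

  have hcastm : ∀ (X : Ω → ℕ), Measurable X → Measurable fun ω => ((X ω : ℕ) : ℝ≥0∞) :=
    fun X hX => (measurable_of_countable (fun k : ℕ => (k : ℝ≥0∞))).comp hX
  -- transfer of lintegrals along identical distribution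
  have hcompLf : ∀ i n j (g : ℕ → ℝ≥0∞),
      ∫⁻ ω, g (Lfam i n j ω) ∂P = ∫⁻ ω, g (L ω) ∂P := by
    intro i n j g
    rw [← lintegral_map (measurable_of_countable g) (hmLfam i n j), hid i n j,
      lintegral_map (measurable_of_countable g) hmL]
  have hEL : ∫⁻ ω, (L ω : ℝ≥0∞) ∂P = 1 := by
    have h1 : ∀ ω, ((L ω : ℕ) : ℝ≥0∞) = ENNReal.ofReal ((L ω : ℕ) : ℝ) := fun ω =>
      (ENNReal.ofReal_natCast (L ω)).symm
    rw [lintegral_congr h1, ← ofReal_integral_eq_lintegral_ofReal hLint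
      (ae_of_all _ fun ω => Nat.cast_nonneg _), hmean, ENNReal.ofReal_one]

  have hEZ : ∀ i n, ∫⁻ ω, (Zs i n ω : ℝ≥0∞) ∂P = 1 := by
    intro i n
    induction n with
    | zero =>
        have : ∀ ω, ((Zs i 0 ω : ℕ) : ℝ≥0∞) = 1 := fun ω => by rw [hZ0 i ω]; norm_num
        rw [lintegral_congr this, lintegral_one, measure_univ]
    | succ n ih =>
        have hterm : ∀ k : ℕ,
            ∫⁻ ω, ({ω' | Zs i n ω' = k}.indicator 1 ω) * (Zs i (n+1) ω : ℝ≥0∞) ∂P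
              = (k : ℝ≥0∞) * P {ω | Zs i n ω = k} := by
          intro k
          have hpt : ∀ ω, ({ω' | Zs i n ω' = k}.indicator 1 ω) * (Zs i (n+1) ω : ℝ≥0∞)
              = ∑ j ∈ Finset.range k,
                  ({ω' | Zs i n ω' = k}.indicator 1 ω) * (Lfam i (n+1) j ω : ℝ≥0∞) := by
            intro ω
            rw [← Finset.mul_sum]
            by_cases h : Zs i n ω = k
            · rw [Set.indicator_of_mem (show ω ∈ {ω' | Zs i n ω' = k} from h)]
              rw [hZrec i n ω, h, Nat.cast_sum]
            · rw [Set.indicator_of_notMem (show ω ∉ {ω' | Zs i n ω' = k} from h)]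
              simp
          have hsum := lintegral_finset_sum (μ := P) (Finset.range k)
            (f := fun j ω => ({ω' | Zs i n ω' = k}.indicator 1 ω) * (Lfam i (n+1) j ω : ℝ≥0∞))
            (fun j _ =>
              (measurable_const.indicator ((hmeasZ0 i n) (measurableSet_singleton k))).mul
                (hcastm _ (hmLfam i (n+1) j)))
          rw [lintegral_congr hpt, hsum]
          have hjterm : ∀ j ∈ Finset.range k,
              ∫⁻ ω, ({ω' | Zs i n ω' = k}.indicator 1 ω) * (Lfam i (n+1) j ω : ℝ≥0∞) ∂P
                = P {ω | Zs i n ω = k} := by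
            intro j _
            have hdisj : Disjoint {p : ℕ×ℕ×ℕ | p.1 = i ∧ p.2.1 ≤ n} {((i, n+1, j) : ℕ×ℕ×ℕ)} :=
              Set.disjoint_left.mpr (fun p hp hq => by
                rw [Set.mem_singleton_iff] at hq; subst hq; exact absurd hp.2 (by simp))
            have hmg : Measurable[mG {((i, n+1, j) : ℕ×ℕ×ℕ)}]
                (fun ω => (Lfam i (n+1) j ω : ℝ≥0∞)) :=
              (measurable_of_countable (fun m : ℕ => (m : ℝ≥0∞))).comp
                (hmeasLp (i, n+1, j) _ rfl)
            rw [hmul2 _ _ hdisj (fun ω => ({ω' | Zs i n ω' = k}.indicator 1 ω))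
              (fun ω => (Lfam i (n+1) j ω : ℝ≥0∞))
              (measurable_const.indicator ((hmeasZ i n) (measurableSet_singleton k))) hmg,
              lintegral_indicator_one (show MeasurableSet {ω' | Zs i n ω' = k} from
                (hmeasZ0 i n) (measurableSet_singleton k)),
              hcompLf i (n+1) j (fun m : ℕ => (m : ℝ≥0∞)), hEL, mul_one]
          rw [Finset.sum_congr rfl hjterm]
          simp [Finset.sum_const, Finset.card_range, nsmul_eq_mul]
        rw [lintegral_partition (hmeasZ0 i n) (hcastm _ (hmeasZ0 i (n+1))),
          tsum_congr hterm, ← lintegral_comp_countable (hmeasZ0 i n) (fun k : ℕ => (k : ℝ≥0∞))]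
        exact ih

  set F : ℝ≥0∞ → ℝ≥0∞ := fun s => ∫⁻ ω, s ^ (L ω) ∂P with hFdef
  have hFmono : Monotone F := fun a b hab => lintegral_mono fun ω => pow_le_pow_left' hab _
  have hGstep : ∀ i n s, ∫⁻ ω, s ^ (Zs i (n+1) ω) ∂P = ∫⁻ ω, (F s) ^ (Zs i n ω) ∂P := by
    intro i n s
    have hmeaspow : Measurable fun ω => s ^ (Zs i (n+1) ω) :=
      (measurable_of_countable (fun k : ℕ => s ^ k)).comp (hmeasZ0 i (n+1))
    rw [lintegral_partition (hmeasZ0 i n) hmeaspow]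
    have hterm : ∀ k : ℕ,
        ∫⁻ ω, ({ω' | Zs i n ω' = k}.indicator 1 ω) * s ^ (Zs i (n+1) ω) ∂P
          = (F s) ^ k * P {ω | Zs i n ω = k} := by
      intro k
      have hinj : ∀ j1 ∈ Finset.range k, ∀ j2 ∈ Finset.range k,
          ((i, n+1, j1) : ℕ×ℕ×ℕ) = (i, n+1, j2) → j1 = j2 := by
        intro j1 _ j2 _ h
        simpa using h
      set T : Finset (ℕ×ℕ×ℕ) := (Finset.range k).image (fun j => (i, n+1, j)) with hT
      have hpt : ∀ ω, ({ω' | Zs i n ω' = k}.indicator 1 ω) * s ^ (Zs i (n+1) ω)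
          = ({ω' | Zs i n ω' = k}.indicator 1 ω) *
              ∏ t ∈ T, (fun _ : ℕ×ℕ×ℕ => fun m : ℕ => s ^ m) t (Lfam t.1 t.2.1 t.2.2 ω) := by
        intro ω
        by_cases h : Zs i n ω = k
        · rw [Set.indicator_of_mem (show ω ∈ {ω' | Zs i n ω' = k} from h), Pi.one_apply,
            one_mul, one_mul, hT, Finset.prod_image hinj]
          simp only []
          rw [Finset.prod_pow_eq_pow_sum, hZrec i n ω, h]
        · rw [Set.indicator_of_notMem (show ω ∉ {ω' | Zs i n ω' = k} from h)]
          simp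
      have hTS : ∀ t ∈ T, t ∉ {p : ℕ×ℕ×ℕ | p.1 = i ∧ p.2.1 ≤ n} := by
        intro t ht
        rw [hT, Finset.mem_image] at ht
        obtain ⟨j, _, rfl⟩ := ht
        intro hmem
        exact absurd hmem.2 (by simp)
      have key := hsplit {p : ℕ×ℕ×ℕ | p.1 = i ∧ p.2.1 ≤ n}
        (fun ω => ({ω' | Zs i n ω' = k}.indicator 1 ω))
        (measurable_const.indicator ((hmeasZ i n) (measurableSet_singleton k)))
        T hTS (fun _ : ℕ×ℕ×ℕ => fun m : ℕ => s ^ m)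
      rw [lintegral_congr hpt, key,
        lintegral_indicator_one (show MeasurableSet {ω' | Zs i n ω' = k} from
          (hmeasZ0 i n) (measurableSet_singleton k))]
      have hprod : ∏ t ∈ T, ∫⁻ ω, (fun _ : ℕ×ℕ×ℕ => fun m : ℕ => s ^ m) t
          (Lfam t.1 t.2.1 t.2.2 ω) ∂P = (F s) ^ k := by
        rw [Finset.prod_congr rfl (fun t _ => hcompLf t.1 t.2.1 t.2.2 (fun m : ℕ => s ^ m)),
          Finset.prod_const, hT, Finset.card_image_of_injOn
            (fun j1 h1 j2 h2 h => hinj j1 h1 j2 h2 h), Finset.card_range]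
      rw [hprod, mul_comm]
    rw [tsum_congr hterm, ← lintegral_comp_countable (hmeasZ0 i n) (fun k : ℕ => (F s) ^ k)]
  have hGiter : ∀ i n s, ∫⁻ ω, s ^ (Zs i n ω) ∂P = F^[n] s := by
    intro i n
    induction n with
    | zero =>
        intro s
        have : ∀ ω, s ^ (Zs i 0 ω) = s := fun ω => by rw [hZ0 i ω, pow_one]
        rw [lintegral_congr this, lintegral_const, measure_univ, mul_one,
          Function.iterate_zero_apply]
    | succ n ih =>
        intro s
        rw [hGstep i n s, ih (F s), ← Function.iterate_succ_apply]
  set u : ℕ → ℝ≥0∞ := fun n => F^[n] 0 with hudef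
  have hZ0prob : ∀ i n, P {ω | Zs i n ω = 0} = u n := by
    intro i n
    have h := lintegral_comp_countable (P := P) (hmeasZ0 i n) (fun k : ℕ => (0:ℝ≥0∞) ^ k)
    rw [hGiter i n 0] at h
    rw [tsum_eq_single 0 (fun k hk => by rw [zero_pow hk, zero_mul]), pow_zero, one_mul] at h
    exact h.symm
  have hu_mono : Monotone u := monotone_nat_of_le_succ fun n => by
    simp only [hudef, Function.iterate_succ_apply]
    exact (hFmono.iterate n) zero_le
  have hu_le1 : ∀ n, u n ≤ 1 := fun n => (hZ0prob 0 n) ▸ prob_le_one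
  have hl_le1 : (⨆ n, u n) ≤ 1 := iSup_le hu_le1
  have hpow_sup : ∀ k : ℕ, (⨆ n, u n) ^ k = ⨆ n, (u n) ^ k := by
    intro k
    have h1 : Tendsto (fun n => u n ^ k) atTop (nhds ((⨆ n, u n) ^ k)) :=
      ((ENNReal.continuous_pow k).continuousAt.tendsto).comp (tendsto_atTop_iSup hu_mono)
    exact tendsto_nhds_unique h1
      (tendsto_atTop_iSup (fun a b hab => pow_le_pow_left' (hu_mono hab) k))
  have hFsup : F (⨆ n, u n) = ⨆ n, u n := by
    have h1 : F (⨆ n, u n) = ∫⁻ ω, ⨆ n, (u n) ^ (L ω) ∂P :=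
      lintegral_congr fun ω => hpow_sup (L ω)
    rw [h1, lintegral_iSup (f := fun n ω => (u n) ^ (L ω))
      (fun n => (measurable_of_countable (fun k : ℕ => (u n) ^ k)).comp hmL)
      (fun a b hab ω => pow_le_pow_left' (hu_mono hab) _)]
    have h2 : ∀ n, ∫⁻ ω, (u n) ^ (L ω) ∂P = u (n+1) := fun n => by
      simp only [hudef, Function.iterate_succ_apply']
      rfl
    rw [iSup_congr h2]
    exact le_antisymm (iSup_le fun n => le_iSup u (n+1))
      (iSup_le fun n => (hu_mono (Nat.le_succ n)).trans (le_iSup (fun i => u (i+1)) n))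
  have hsumEL : ∑' k : ℕ, (k:ℝ≥0∞) * P {ω | L ω = k} = 1 := by
    rw [← lintegral_comp_countable hmL (fun k : ℕ => (k:ℝ≥0∞))]; exact hEL
  have hsum1 : ∑' k : ℕ, P {ω | L ω = k} = 1 := by
    have h := lintegral_comp_countable (P := P) hmL (fun _ : ℕ => (1:ℝ≥0∞))
    simp only [one_mul] at h
    rw [lintegral_one, measure_univ] at h
    exact h.symm
  have hk0 : ∃ k0 : ℕ, 2 ≤ k0 ∧ P {ω | L ω = k0} ≠ 0 := by
    by_contra hcon
    push_neg at hcon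
    have h1 : ∑' k : ℕ, (k:ℝ≥0∞) * P {ω | L ω = k} = P {ω | L ω = 1} := by
      rw [tsum_eq_single 1 ?_]
      · rw [Nat.cast_one, one_mul]
      · intro k hk
        match k, hk with
        | 0, _ => simp
        | 1, hk => exact absurd rfl hk
        | (m+2), _ => rw [hcon (m+2) (by omega), mul_zero]
    rw [hsumEL] at h1
    exact absurd h1.symm (ne_of_lt hnotdet)
  have hFgt : ∀ s, s < 1 → s < F s := by
    obtain ⟨k0, hk02, hk0pos⟩ := hk0
    intro s hs
    set t := 1 - s with htdef
    have hst : s + t = 1 := add_tsub_cancel_of_le hs.le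
    have ht0 : t ≠ 0 := by rw [htdef]; exact (tsub_pos_of_lt hs).ne'
    have hFs : F s = ∑' k : ℕ, P {ω | L ω = k} * s ^ k := by
      rw [show F s = ∫⁻ ω, s ^ L ω ∂P from rfl,
        lintegral_comp_countable hmL (fun k : ℕ => s ^ k)]
      exact tsum_congr fun k => mul_comm _ _
    have hmu1 : ∑' k : ℕ, (P {ω | L ω = k} * k) = 1 := by
      rw [tsum_congr (fun k : ℕ => mul_comm (P {ω | L ω = k}) (k:ℝ≥0∞))]
      exact hsumEL
    have h3 : ∑' k : ℕ, P {ω | L ω = k} * (s ^ k + k * t) = F s + t := by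
      calc ∑' k : ℕ, P {ω | L ω = k} * (s ^ k + k * t)
          = ∑' k : ℕ, (P {ω | L ω = k} * s ^ k + (P {ω | L ω = k} * k) * t) :=
            tsum_congr fun k => by ring
        _ = (∑' k : ℕ, P {ω | L ω = k} * s ^ k) + (∑' k : ℕ, (P {ω | L ω = k} * k)) * t := by
            rw [ENNReal.tsum_add, ENNReal.tsum_mul_right]
        _ = F s + t := by rw [hmu1, one_mul, ← hFs]
    have h2 : ∑' k : ℕ, P {ω | L ω = k} * (if k = k0 then 1 + t^2 else 1)
        = 1 + P {ω | L ω = k0} * t^2 := by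
      calc ∑' k : ℕ, P {ω | L ω = k} * (if k = k0 then 1 + t^2 else 1)
          = ∑' k : ℕ, (P {ω | L ω = k} + (if k = k0 then P {ω | L ω = k0} * t^2 else 0)) :=
            tsum_congr fun k => by
              split_ifs with h
              · subst h; ring
              · rw [mul_one, add_zero]
        _ = 1 + P {ω | L ω = k0} * t^2 := by
            rw [ENNReal.tsum_add, hsum1, tsum_eq_single k0 (fun k hk => if_neg hk), if_pos rfl]
    have hle : (1 : ℝ≥0∞) + P {ω | L ω = k0} * t^2 ≤ F s + t := by
      rw [← h2, ← h3]
      refine Summable.tsum_le_tsum (fun k => mul_le_mul_right ?_ _) ENNReal.summable ENNReal.summable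
      split_ifs with h
      · subst h; exact ennreal_bern2 hst hk02
      · exact ennreal_bern1 hst k
    by_contra hng
    push_neg at hng
    have habs : (1:ℝ≥0∞) < 1 := by
      calc (1:ℝ≥0∞) < 1 + P {ω | L ω = k0} * t^2 :=
            ENNReal.lt_add_right ENNReal.one_ne_top (mul_ne_zero hk0pos (pow_ne_zero 2 ht0))
        _ ≤ F s + t := hle
        _ ≤ s + t := add_le_add_left hng t
        _ = 1 := hst
    exact absurd habs (lt_irrefl 1)
  have hl1 : (⨆ n, u n) = 1 := by
    rcases hl_le1.lt_or_eq with h | h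
    · exact absurd hFsup (hFgt _ h).ne'
    · exact h
  have hqtend : ∀ i, Tendsto (fun n => P {ω | 0 < Zs i n ω}) atTop (nhds 0) := by
    intro i
    have hval : ∀ n, P {ω | 0 < Zs i n ω} = 1 - u n := by
      intro n
      have hset : {ω | 0 < Zs i n ω} = {ω | Zs i n ω = 0}ᶜ := by
        ext ω; simp [pos_iff_ne_zero]
      rw [hset, prob_compl_eq_one_sub (show MeasurableSet {ω | Zs i n ω = 0} from
        (hmeasZ0 i n) (measurableSet_singleton 0)), hZ0prob i n]
    simp only [hval]
    have hu1 : Tendsto u atTop (nhds 1) := hl1 ▸ tendsto_atTop_iSup hu_mono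
    have hsub := ENNReal.Tendsto.sub (tendsto_const_nhds : Tendsto (fun _ : ℕ => (1:ℝ≥0∞)) atTop (nhds 1)) hu1
      (Or.inl ENNReal.one_ne_top)
    simpa using hsub

  -- events A n v and their probabilities tend to 0
  set A : ℕ → ℕ → Set Ω := fun n v => ⋃ i ∈ Finset.Ico 1 v, {ω | 0 < Zs i n ω} with hAdef
  have hmeasZpos : ∀ i n v, i < v → MeasurableSet[mG {p | p.1 < v}] {ω | 0 < Zs i n ω} := by
    intro i n v hiv
    have hm : Measurable[mG {p | p.1 < v}] (Zs i n) :=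
      (hmeasZ i n).mono (hGmono (fun p hp => by simp only [Set.mem_setOf_eq] at hp ⊢; omega)) le_rfl
    have hset : {ω | 0 < Zs i n ω} = {ω | Zs i n ω = 0}ᶜ := by ext ω; simp [pos_iff_ne_zero]
    rw [hset]
    exact (hm (measurableSet_singleton 0)).compl
  have hAmeasG : ∀ n v, MeasurableSet[mG {p | p.1 < v}] (A n v) := by
    intro n v
    exact Finset.measurableSet_biUnion _ fun i hi => hmeasZpos i n v (Finset.mem_Ico.mp hi).2
  have hAmeas : ∀ n v, MeasurableSet (A n v) := fun n v => (hGle _) _ (hAmeasG n v)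
  have hAtend : ∀ v, Tendsto (fun n => P (A n v)) atTop (nhds 0) := by
    intro v
    have hub : ∀ n, P (A n v) ≤ ∑ i ∈ Finset.Ico 1 v, P {ω | 0 < Zs i n ω} := fun n =>
      measure_biUnion_finset_le _ _
    have hsumt : Tendsto (fun n => ∑ i ∈ Finset.Ico 1 v, P {ω | 0 < Zs i n ω}) atTop (nhds 0) := by
      have h := tendsto_finset_sum (Finset.Ico 1 v) (fun i (_ : i ∈ Finset.Ico 1 v) => hqtend i)
      simpa using h
    exact tendsto_of_tendsto_of_tendsto_of_le_of_le tendsto_const_nhds hsumt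
      (fun n => zero_le) hub
  -- the full family as one random element
  have hfamm : Measurable (fun ω => fun p : ℕ × ℕ × ℕ => Lfam p.1 p.2.1 p.2.2 ω) :=
    measurable_pi_lambda _ fun p => hmLfam p.1 p.2.1 p.2.2
  have hGcomap : ∀ S, mG S ≤ MeasurableSpace.comap
      (fun ω => fun p : ℕ × ℕ × ℕ => Lfam p.1 p.2.1 p.2.2 ω) inferInstance := by
    intro S
    refine iSup₂_le fun p _ => ?_
    have hcc : MeasurableSpace.comap (Lfam p.1 p.2.1 p.2.2)
          (inferInstance : MeasurableSpace ℕ)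
        = MeasurableSpace.comap (fun ω => fun p : ℕ × ℕ × ℕ => Lfam p.1 p.2.1 p.2.2 ω)
            (MeasurableSpace.comap (fun g : ℕ × ℕ × ℕ → ℕ => g p) inferInstance) := by
      rw [MeasurableSpace.comap_comp]; rfl
    rw [hcc]
    exact MeasurableSpace.comap_mono (measurable_iff_comap_le.mp (measurable_pi_apply p))
  have hIndYV : Indep
      (MeasurableSpace.comap (fun ω => (Y ω, V ω)) inferInstance)
      (MeasurableSpace.comap (fun ω => fun p : ℕ × ℕ × ℕ => Lfam p.1 p.2.1 p.2.2 ω)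
        inferInstance) P :=
    (IndepFun_iff_Indep _ _ _).mp hindepYV
  have hXYm : Measurable (fun ω => (Y ω, V ω)) := hmY.prodMk hmV
  have hXYset : ∀ q : ℕ × ℕ, MeasurableSet[MeasurableSpace.comap
      (fun ω => (Y ω, V ω)) inferInstance] {ω | (Y ω, V ω) = q} :=
    fun q => ⟨{q}, measurableSet_singleton q, rfl⟩
  have hkey : ∀ (g : Ω → ℝ≥0∞) (q : ℕ × ℕ),
      Measurable[MeasurableSpace.comap
        (fun ω => fun p : ℕ × ℕ × ℕ => Lfam p.1 p.2.1 p.2.2 ω) inferInstance] g →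
      ∫⁻ ω, ({ω' | (Y ω', V ω') = q}.indicator 1 ω) * g ω ∂P
        = P {ω' | (Y ω', V ω') = q} * ∫⁻ ω, g ω ∂P := by
    intro g q hg
    rw [lintegral_mul_eq_lintegral_mul_lintegral_of_independent_measurableSpace
      (f := fun ω => ({ω' | (Y ω', V ω') = q}.indicator 1 ω)) (g := g)
      (measurable_iff_comap_le.mp hXYm) (measurable_iff_comap_le.mp hfamm)
      hIndYV (measurable_const.indicator (hXYset q)) hg,
      lintegral_indicator_one (show MeasurableSet {ω' | (Y ω', V ω') = q} from
        hXYm (measurableSet_singleton q))]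
  have hBA : ∀ n ω, ω ∈ B n ↔ ω ∈ A n (V ω) := by
    intro n ω
    rw [hB n, hAdef]
    simp only [Set.mem_setOf_eq, Set.mem_iUnion, Finset.mem_Ico, exists_prop]
    constructor
    · rintro ⟨i, h1, h2, h3⟩; exact ⟨i, ⟨h1, h2⟩, h3⟩
    · rintro ⟨i, ⟨h1, h2⟩, h3⟩; exact ⟨i, h1, h2, h3⟩
  have hBmeas : ∀ n, MeasurableSet (B n) := by
    intro n
    have hBeq : B n = ⋃ v, ({ω | V ω = v} ∩ A n v) := by
      ext ω
      simp only [Set.mem_iUnion, Set.mem_inter_iff, Set.mem_setOf_eq]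
      constructor
      · intro hω; exact ⟨V ω, rfl, (hBA n ω).mp hω⟩
      · rintro ⟨v, rfl, hA⟩; exact (hBA n ω).mpr hA
    rw [hBeq]
    exact MeasurableSet.iUnion fun v =>
      ((hmV (measurableSet_singleton v)).inter (hAmeas n v))
  -- decomposition of P (B n)
  have hBterm : ∀ n (q : ℕ × ℕ),
      ∫⁻ ω, ({ω' | (Y ω', V ω') = q}.indicator (1 : Ω → ℝ≥0∞) ω) *
          ((B n).indicator (1 : Ω → ℝ≥0∞) ω) ∂P
        = P {ω' | (Y ω', V ω') = q} * P (A n q.2) := by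
    intro n q
    have hpt : ∀ ω, ({ω' | (Y ω', V ω') = q}.indicator (1 : Ω → ℝ≥0∞) ω) *
          ((B n).indicator (1 : Ω → ℝ≥0∞) ω)
        = ({ω' | (Y ω', V ω') = q}.indicator (1 : Ω → ℝ≥0∞) ω) *
          ((A n q.2).indicator (1 : Ω → ℝ≥0∞) ω) := by
      intro ω
      by_cases h : (Y ω, V ω) = q
      · have hv : V ω = q.2 := by rw [← h]
        congr 1
        by_cases hb : ω ∈ B n
        · rw [Set.indicator_of_mem hb, Set.indicator_of_mem (hv ▸ (hBA n ω).mp hb)]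
        · rw [Set.indicator_of_notMem hb,
            Set.indicator_of_notMem (fun hA => hb ((hBA n ω).mpr (hv ▸ hA)))]
      · rw [Set.indicator_of_notMem (show ω ∉ {ω' | (Y ω', V ω') = q} from h),
          zero_mul, zero_mul]
    rw [lintegral_congr hpt, hkey ((A n q.2).indicator (1 : Ω → ℝ≥0∞)) q
      ((measurable_const.indicator (hAmeasG n q.2)).mono (hGcomap _) le_rfl),
      lintegral_indicator_one (hAmeas n q.2)]
  have hsumXY : ∑' q : ℕ × ℕ, P {ω' | (Y ω', V ω') = q} = 1 := by
    have h := lintegral_comp_countable (P := P) hXYm (fun _ : ℕ × ℕ => (1:ℝ≥0∞))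
    simp only [one_mul] at h
    rw [lintegral_one, measure_univ] at h
    exact h.symm
  have hPB : ∀ n, P (B n) = ∑' q : ℕ × ℕ, P {ω' | (Y ω', V ω') = q} * P (A n q.2) := by
    intro n
    rw [← lintegral_indicator_one (hBmeas n),
      lintegral_partition (f := (B n).indicator 1) hXYm
        (measurable_const.indicator (hBmeas n))]
    exact tsum_congr (hBterm n)
  have hbeta : Tendsto (fun n => P (B n)) atTop (nhds 0) := by
    have h0 : ∀ n, P (B n)
        = ∫⁻ q : ℕ × ℕ, (P {ω' | (Y ω', V ω') = q} * P (A n q.2)) ∂(Measure.count) := by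
      intro n; rw [hPB n, lintegral_count]
    simp only [h0]
    have hdom := tendsto_lintegral_of_dominated_convergence (μ := (Measure.count : Measure (ℕ × ℕ)))
      (F := fun n (q : ℕ × ℕ) => P {ω' | (Y ω', V ω') = q} * P (A n q.2))
      (f := fun _ => 0)
      (bound := fun q : ℕ × ℕ => P {ω' | (Y ω', V ω') = q})
      (fun n => measurable_of_countable _)
      (fun n => ae_of_all _ fun q => by
        calc P {ω' | (Y ω', V ω') = q} * P (A n q.2)
            ≤ P {ω' | (Y ω', V ω') = q} * 1 := mul_le_mul_right prob_le_one _
          _ = P {ω' | (Y ω', V ω') = q} := mul_one _)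
      (by rw [lintegral_count, hsumXY]; exact ENNReal.one_ne_top)
      (ae_of_all _ fun q => by
        simpa using ENNReal.Tendsto.const_mul (hAtend q.2) (Or.inr (measure_ne_top P _)))
    simpa using hdom
  refine ⟨hbeta, fun hYfin => ?_⟩
  -- α part
  have hrmeas : ∀ n, Measurable (r n) := by
    intro n
    refine measurable_to_countable' fun m => ?_
    have hset : (r n) ⁻¹' {m} = ⋃ q : ℕ × ℕ,
        ({ω | (Y ω, V ω) = q} ∩ {ω | ∑ i ∈ Finset.Ioc q.2 q.1, Zs i n ω = m}) := by
      ext ω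
      simp only [Set.mem_preimage, Set.mem_singleton_iff, Set.mem_iUnion, Set.mem_inter_iff,
        Set.mem_setOf_eq, hr n ω]
      constructor
      · intro h; exact ⟨(Y ω, V ω), rfl, h⟩
      · rintro ⟨⟨a, b⟩, hq, h⟩
        rw [Prod.mk.injEq] at hq
        rw [← hq.1, ← hq.2] at h
        exact h
    rw [hset]
    exact MeasurableSet.iUnion fun q =>
      ((hXYm (measurableSet_singleton q)).inter
        ((Finset.measurable_sum _ fun i _ => hmeasZ0 i n) (measurableSet_singleton m)))
  have hterm : ∀ n (q : ℕ × ℕ),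
      ∫⁻ ω, ({ω' | (Y ω', V ω') = q}.indicator 1 ω) *
          ((B n).indicator (fun ω' => (r n ω' : ℝ≥0∞)) ω) ∂P
        = (((Finset.Ioc q.2 q.1).card : ℝ≥0∞) * P {ω' | (Y ω', V ω') = q}) * P (A n q.2) := by
    intro n q
    have hpt : ∀ ω, ({ω' | (Y ω', V ω') = q}.indicator 1 ω) *
          ((B n).indicator (fun ω' => (r n ω' : ℝ≥0∞)) ω)
        = ∑ i ∈ Finset.Ioc q.2 q.1, ({ω' | (Y ω', V ω') = q}.indicator 1 ω) *
            (((A n q.2).indicator 1 ω) * (Zs i n ω : ℝ≥0∞)) := by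
      intro ω
      rw [← Finset.mul_sum, ← Finset.mul_sum]
      by_cases h : (Y ω, V ω) = q
      · have hv : V ω = q.2 := by rw [← h]
        have hy : Y ω = q.1 := by rw [← h]
        congr 1
        by_cases hb : ω ∈ B n
        · rw [Set.indicator_of_mem hb, Set.indicator_of_mem (hv ▸ (hBA n ω).mp hb),
            Pi.one_apply, one_mul, hr n ω, hv, hy, Nat.cast_sum]
        · rw [Set.indicator_of_notMem hb,
            Set.indicator_of_notMem (fun hA => hb ((hBA n ω).mpr (hv ▸ hA))), zero_mul]
      · rw [Set.indicator_of_notMem (show ω ∉ {ω' | (Y ω', V ω') = q} from h),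
          zero_mul, zero_mul]
    have hmeassummand : ∀ i ∈ Finset.Ioc q.2 q.1, Measurable (fun ω =>
        ({ω' | (Y ω', V ω') = q}.indicator 1 ω) *
          (((A n q.2).indicator 1 ω) * (Zs i n ω : ℝ≥0∞))) := fun i _ =>
      (measurable_const.indicator (hXYm (measurableSet_singleton q))).mul
        ((measurable_const.indicator (hAmeas n q.2)).mul (hcastm _ (hmeasZ0 i n)))
    have hsum := lintegral_finset_sum (μ := P) (Finset.Ioc q.2 q.1)
      (f := fun i ω => ({ω' | (Y ω', V ω') = q}.indicator 1 ω) *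
        (((A n q.2).indicator 1 ω) * (Zs i n ω : ℝ≥0∞))) hmeassummand
    rw [lintegral_congr hpt, hsum]
    have hiterm : ∀ i ∈ Finset.Ioc q.2 q.1,
        ∫⁻ ω, ({ω' | (Y ω', V ω') = q}.indicator 1 ω) *
            (((A n q.2).indicator 1 ω) * (Zs i n ω : ℝ≥0∞)) ∂P
          = P {ω' | (Y ω', V ω') = q} * P (A n q.2) := by
      intro i hi
      have hiv : q.2 < i := (Finset.mem_Ioc.mp hi).1
      have hgm : Measurable[MeasurableSpace.comap
          (fun ω => fun p : ℕ × ℕ × ℕ => Lfam p.1 p.2.1 p.2.2 ω) inferInstance]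
          (fun ω => ((A n q.2).indicator 1 ω) * (Zs i n ω : ℝ≥0∞)) :=
        ((measurable_const.indicator (hAmeasG n q.2)).mono (hGcomap _) le_rfl).mul
          (((measurable_of_countable (fun k : ℕ => (k : ℝ≥0∞))).comp (hmeasZ i n)).mono
            (hGcomap _) le_rfl)
      rw [hkey (fun ω => ((A n q.2).indicator (1 : Ω → ℝ≥0∞) ω) * (Zs i n ω : ℝ≥0∞)) q hgm]
      congr 1
      have hdisj : Disjoint {p : ℕ×ℕ×ℕ | p.1 < q.2} {p : ℕ×ℕ×ℕ | p.1 = i ∧ p.2.1 ≤ n} :=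
        Set.disjoint_left.mpr fun p hp hq' => by
          rw [Set.mem_setOf_eq] at hp hq'
          omega
      rw [hmul2 _ _ hdisj (fun ω => ((A n q.2).indicator 1 ω))
        (fun ω => (Zs i n ω : ℝ≥0∞))
        (measurable_const.indicator (hAmeasG n q.2))
        ((measurable_of_countable (fun k : ℕ => (k : ℝ≥0∞))).comp (hmeasZ i n)),
        lintegral_indicator_one (hAmeas n q.2), hEZ i n, mul_one]
    rw [Finset.sum_congr rfl hiterm, Finset.sum_const, nsmul_eq_mul, mul_assoc]
  have hαeq : ∀ n, ∫⁻ ω in B n, (r n ω : ℝ≥0∞) ∂P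
      = ∑' q : ℕ × ℕ, (((Finset.Ioc q.2 q.1).card : ℝ≥0∞) *
          P {ω' | (Y ω', V ω') = q}) * P (A n q.2) := by
    intro n
    rw [← lintegral_indicator (hBmeas n),
      lintegral_partition (f := (B n).indicator fun ω' => (r n ω' : ℝ≥0∞)) hXYm
        ((hcastm _ (hrmeas n)).indicator (hBmeas n))]
    exact tsum_congr (hterm n)
  have hYsum : ∑' q : ℕ × ℕ, (q.1 : ℝ≥0∞) * P {ω' | (Y ω', V ω') = q}
      = ∫⁻ ω, (Y ω : ℝ≥0∞) ∂P :=
    (lintegral_comp_countable (P := P) hXYm (fun q : ℕ × ℕ => (q.1 : ℝ≥0∞))).symm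
  have h0 : ∀ n, ∫⁻ ω in B n, (r n ω : ℝ≥0∞) ∂P
      = ∫⁻ q : ℕ × ℕ, ((((Finset.Ioc q.2 q.1).card : ℝ≥0∞) *
          P {ω' | (Y ω', V ω') = q}) * P (A n q.2)) ∂(Measure.count) := by
    intro n; rw [hαeq n, lintegral_count]
  simp only [h0]
  have hdom := tendsto_lintegral_of_dominated_convergence (μ := (Measure.count : Measure (ℕ × ℕ)))
    (F := fun n (q : ℕ × ℕ) => (((Finset.Ioc q.2 q.1).card : ℝ≥0∞) *
        P {ω' | (Y ω', V ω') = q}) * P (A n q.2))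
    (f := fun _ => 0)
    (bound := fun q : ℕ × ℕ => (q.1 : ℝ≥0∞) * P {ω' | (Y ω', V ω') = q})
    (fun n => measurable_of_countable _)
    (fun n => ae_of_all _ fun q => by
      have hcard : ((Finset.Ioc q.2 q.1).card : ℝ≥0∞) ≤ (q.1 : ℝ≥0∞) := by
        rw [Nat.card_Ioc]
        exact_mod_cast Nat.cast_le.mpr (Nat.sub_le q.1 q.2)
      calc (((Finset.Ioc q.2 q.1).card : ℝ≥0∞) * P {ω' | (Y ω', V ω') = q}) * P (A n q.2)
          ≤ (((Finset.Ioc q.2 q.1).card : ℝ≥0∞) * P {ω' | (Y ω', V ω') = q}) * 1 :=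
            mul_le_mul_right prob_le_one _
        _ = ((Finset.Ioc q.2 q.1).card : ℝ≥0∞) * P {ω' | (Y ω', V ω') = q} := mul_one _
        _ ≤ (q.1 : ℝ≥0∞) * P {ω' | (Y ω', V ω') = q} := mul_le_mul_left hcard _)
    (by rw [lintegral_count, hYsum]; exact hYfin.ne)
    (ae_of_all _ fun q => by
      have hconst : ((Finset.Ioc q.2 q.1).card : ℝ≥0∞) * P {ω' | (Y ω', V ω') = q} ≠ ⊤ :=
        ENNReal.mul_ne_top (ENNReal.natCast_ne_top _) (measure_ne_top P _)
      simpa using ENNReal.Tendsto.const_mul (hAtend q.2) (Or.inr hconst))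
  simpa using hdom
end

section
/- Let X be a nonnegative real random variable with 0 < E[X] < ∞, let X̂ be a random variable with the size-biased distribution of X, and let U be uniformly distributed on [0, 1] and independent of X̂. Then U · X̂ has the same distribution as X if and only if X has an exponential distribution. -/
open MeasureTheory ProbabilityTheory Filter Set
open scoped ENNReal

set_option maxHeartbeats 1000000

lemma aux_ofReal_max (a : ℝ) : ENNReal.ofReal (max a 0) = ENNReal.ofReal a := by
  rcases le_total a 0 with h | h
  · rw [max_eq_right h, ENNReal.ofReal_zero, eq_comm, ENNReal.ofReal_eq_zero]; exact h
  · rw [max_eq_left h]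

lemma aux_translate (g : ℝ → ℝ≥0∞) (t : ℝ) :
    ∫⁻ s in Set.Ioi (0:ℝ), g (t + s) = ∫⁻ s in Set.Ioi t, g s := by
  have h1 : MeasurePreserving (fun x : ℝ => x + t) volume volume :=
    measurePreserving_add_right volume t
  have h2 : MeasurableEmbedding (fun x : ℝ => x + t) :=
    (MeasurableEquiv.addRight t).measurableEmbedding
  have := h1.setLIntegral_comp_preimage_emb h2 g (Set.Ioi t)
  have hpre : (fun x : ℝ => x + t) ⁻¹' Set.Ioi t = Set.Ioi 0 := by
    ext x; simp [Set.mem_Ioi]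
  rw [hpre] at this
  rw [← this]
  exact setLIntegral_congr_fun measurableSet_Ioi (fun s _ => by
    rw [add_comm])

lemma aux_exp_int {r : ℝ} (hr : 0 < r) (a : ℝ) :
    ∫ s in Set.Ioi a, Real.exp (-(r * s)) = Real.exp (-(r * a)) / r := by
  have hderiv : ∀ x ∈ Set.Ioi a, HasDerivAt (fun s => -Real.exp (-(r * s)) / r)
      (Real.exp (-(r * x))) x := by
    intro x _
    have h := (ProbabilityTheory.hasDerivAt_neg_exp_mul_exp (r := r) (x := x)).div_const r
    refine h.congr_deriv ?_
    rw [mul_div_cancel_left₀ _ hr.ne']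
  have hint : IntegrableOn (fun s => Real.exp (-(r * s))) (Set.Ioi a) := by
    simpa [neg_mul] using exp_neg_integrableOn_Ioi a hr
  have htend : Tendsto (fun s => -Real.exp (-(r * s)) / r) atTop (nhds 0) := by
    have h1 : Tendsto (fun s : ℝ => r * s) atTop atTop :=
      Tendsto.const_mul_atTop hr tendsto_id
    have h2 : Tendsto (fun s : ℝ => Real.exp (-(r * s))) atTop (nhds 0) :=
      Real.tendsto_exp_neg_atTop_nhds_zero.comp h1
    have := (h2.neg).div_const r
    simpa using this
  have hcont : ContinuousWithinAt (fun s => -Real.exp (-(r * s)) / r) (Set.Ici a) a := by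
    apply Continuous.continuousWithinAt
    continuity
  have := MeasureTheory.integral_Ioi_of_hasDerivAt_of_tendsto hcont hderiv hint htend
  rw [this]; ring

/-- **Pakes–Khattree characterization of the exponential distribution.** Let `X ≥ 0`
with `0 < E[X] < ∞`, let `X̂` be size-biased (its law has density `x / E[X]`
w.r.t. the law of `X`) and let `U` be uniform on `[0,1]`, independent of `X̂`.
Then `U · X̂ =ᵈ X` iff `X` is exponentially distributed. -/
theorem stmt_11
    {Ω : Type*} [MeasurableSpace Ω] (P : Measure Ω) [IsProbabilityMeasure P]
    (X Xhat U : Ω → ℝ)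
    (hmX : Measurable X) (hmXhat : Measurable Xhat) (hmU : Measurable U)
    (hnn : ∀ ω, 0 ≤ X ω)
    (hXint : Integrable X P) (hXpos : 0 < ∫ ω, X ω ∂P)
    (hsb : Measure.map Xhat P =
      (Measure.map X P).withDensity (fun x => ENNReal.ofReal (x / ∫ ω, X ω ∂P)))
    (hU : Measure.map U P = volume.restrict (Set.Icc (0 : ℝ) 1))
    (hUindep : IndepFun U Xhat P) :
    Measure.map (fun ω => U ω * Xhat ω) P = Measure.map X P ↔
      ∃ r : ℝ, 0 < r ∧ Measure.map X P = expMeasure r := by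
  set μ : Measure ℝ := Measure.map X P with hμdef
  set m : ℝ := ∫ ω, X ω ∂P with hmdef
  have hm : 0 < m := hXpos
  have hμprob : IsProbabilityMeasure μ := Measure.isProbabilityMeasure_map hmX.aemeasurable
  haveI : IsProbabilityMeasure (Measure.map (fun ω => U ω * Xhat ω) P) :=
    Measure.isProbabilityMeasure_map (hmU.mul hmXhat).aemeasurable
  -- μ lives on [0, ∞)
  have hμIio : μ (Iio 0) = 0 := by
    rw [hμdef, Measure.map_apply hmX measurableSet_Iio]
    have : X ⁻¹' Iio 0 = ∅ := by
      ext ω; simp [Set.mem_Iio, not_lt.2 (hnn ω)]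
    rw [this, measure_empty]
  have hμae : ∀ᵐ x ∂μ, 0 ≤ x := by
    rw [ae_iff]
    have : {x : ℝ | ¬ 0 ≤ x} = Iio 0 := by ext x; simp [not_le]
    rw [this]; exact hμIio
  have hid_int : Integrable (fun x => x) μ := by
    rw [hμdef]
    exact (integrable_map_measure aestronglyMeasurable_id hmX.aemeasurable).2 hXint
  have hm_eq : ∫ x, x ∂μ = m := by
    rw [hμdef]
    exact integral_map hmX.aemeasurable aestronglyMeasurable_id
  have hlint_id : ∫⁻ x, ENNReal.ofReal x ∂μ = ENNReal.ofReal m := by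
    rw [← hm_eq, ← ofReal_integral_eq_lintegral_ofReal hid_int hμae]
  -- layer cake formula
  have hlayer : ∀ t : ℝ, 0 ≤ t → ∫⁻ x, ENNReal.ofReal (x - t) ∂μ
      = ∫⁻ s in Ioi t, μ (Ioi s) := by
    intro t _
    have h1 : ∫⁻ x, ENNReal.ofReal (max (x - t) 0) ∂μ
        = ∫⁻ s in Ioi (0:ℝ), μ {a | s < max (a - t) 0} :=
      lintegral_eq_lintegral_meas_lt μ (Eventually.of_forall fun x => le_max_right _ _)
        ((measurable_id.sub_const t).max measurable_const).aemeasurable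
    have h2 : ∫⁻ x, ENNReal.ofReal (max (x - t) 0) ∂μ = ∫⁻ x, ENNReal.ofReal (x - t) ∂μ := by
      exact lintegral_congr fun x => aux_ofReal_max _
    have h3 : ∫⁻ s in Ioi (0:ℝ), μ {a | s < max (a - t) 0}
        = ∫⁻ s in Ioi (0:ℝ), μ (Ioi (t + s)) := by
      refine setLIntegral_congr_fun measurableSet_Ioi (fun s hs => ?_)
      congr 1
      ext a
      simp only [Set.mem_setOf_eq, Set.mem_Ioi, lt_max_iff]
      constructor
      · rintro (h | h)
        · linarith
        · exact absurd h (not_lt.2 (le_of_lt hs))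
      · intro h; left; linarith
    rw [← h2, h1, h3, aux_translate (fun s => μ (Ioi s)) t]
  -- the key computation: distribution of U * Xhat on (t, ∞) for t ≥ 0
  have hpair : Measure.map (fun ω => (U ω, Xhat ω)) P
      = (Measure.map U P).prod (Measure.map Xhat P) :=
    (indepFun_iff_map_prod_eq_prod_map_map hmU.aemeasurable hmXhat.aemeasurable).mp hUindep
  have hmap_mul : Measure.map (fun ω => U ω * Xhat ω) P
      = Measure.map (fun p : ℝ × ℝ => p.1 * p.2)
          ((volume.restrict (Set.Ioc (0:ℝ) 1)).prod (Measure.map Xhat P)) := by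
    rw [Measure.restrict_congr_set Ioc_ae_eq_Icc, ← hU, ← hpair,
      Measure.map_map (show Measurable (fun p : ℝ × ℝ => p.1 * p.2) from measurable_fst.mul measurable_snd) (hmU.prodMk hmXhat)]
    rfl
  have key : ∀ t : ℝ, 0 ≤ t →
      Measure.map (fun ω => U ω * Xhat ω) P (Ioi t)
        = (∫⁻ x, ENNReal.ofReal (x - t) ∂μ) / ENNReal.ofReal m := by
    intro t ht
    rw [hmap_mul, Measure.map_apply (show Measurable (fun p : ℝ × ℝ => p.1 * p.2) from measurable_fst.mul measurable_snd) measurableSet_Ioi,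
      Measure.prod_apply ((show Measurable (fun p : ℝ × ℝ => p.1 * p.2) from measurable_fst.mul measurable_snd) measurableSet_Ioi)]
    have hinner : ∀ u : ℝ, (Measure.map Xhat P) (Prod.mk u ⁻¹' ((fun p : ℝ × ℝ => p.1 * p.2) ⁻¹' Ioi t))
        = ∫⁻ x, Set.indicator {p : ℝ × ℝ | t < p.1 * p.2}
            (fun p => ENNReal.ofReal (p.2 / m)) (u, x) ∂μ := by
      intro u
      have hset : Prod.mk u ⁻¹' ((fun p : ℝ × ℝ => p.1 * p.2) ⁻¹' Ioi t) = {x : ℝ | t < u * x} := rfl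
      rw [hset, hsb,
        withDensity_apply _ (measurableSet_lt measurable_const (measurable_const_mul u)),
        ← lintegral_indicator (measurableSet_lt measurable_const (measurable_const_mul u))]
      rfl
    simp only [hinner]
    rw [lintegral_lintegral_swap]
    swap
    · have huncurry : Function.uncurry (fun u x => Set.indicator {p : ℝ × ℝ | t < p.1 * p.2}
          (fun p => ENNReal.ofReal (p.2 / m)) (u, x))
          = Set.indicator {p : ℝ × ℝ | t < p.1 * p.2} (fun p => ENNReal.ofReal (p.2 / m)) := by
        funext p; rfl
      rw [huncurry]
      exact (((measurable_snd.div_const m).ennreal_ofReal).indicator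
        (measurableSet_lt measurable_const (measurable_fst.mul measurable_snd))).aemeasurable
    -- inner integral over u
    have hx_inner : ∀ x : ℝ, 0 ≤ x →
        ∫⁻ u in Set.Ioc (0:ℝ) 1, Set.indicator {p : ℝ × ℝ | t < p.1 * p.2}
            (fun p => ENNReal.ofReal (p.2 / m)) (u, x)
          = ENNReal.ofReal ((x - t) / m) := by
      intro x hx
      have hrw : ∀ u : ℝ, Set.indicator {p : ℝ × ℝ | t < p.1 * p.2}
          (fun p => ENNReal.ofReal (p.2 / m)) (u, x)
          = Set.indicator {u : ℝ | t < u * x} (fun _ => ENNReal.ofReal (x / m)) u := by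
        intro u; rfl
      simp only [hrw]
      rw [lintegral_indicator (measurableSet_lt measurable_const (measurable_mul_const x)),
        setLIntegral_const, Measure.restrict_apply
          (measurableSet_lt measurable_const (measurable_mul_const x))]
      rcases eq_or_lt_of_le hx with hx0 | hxpos
      · rw [← hx0]
        rw [show ENNReal.ofReal ((0:ℝ) / m) = 0 by simp, zero_mul,
          show ENNReal.ofReal (((0:ℝ) - t) / m) = 0 by
            rw [ENNReal.ofReal_eq_zero]
            apply div_nonpos_of_nonpos_of_nonneg <;> linarith]
      · have hset : {u : ℝ | t < u * x} ∩ Set.Ioc 0 1 = Set.Ioc (t / x) 1 := by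
          ext u
          simp only [Set.mem_inter_iff, Set.mem_setOf_eq, Set.mem_Ioc]
          constructor
          · rintro ⟨h1, _, h3⟩
            exact ⟨(div_lt_iff₀ hxpos).2 h1, h3⟩
          · rintro ⟨h1, h2⟩
            have h0 : 0 ≤ t / x := div_nonneg ht hxpos.le
            exact ⟨(div_lt_iff₀ hxpos).1 h1, lt_of_le_of_lt h0 h1, h2⟩
        rw [hset, Real.volume_Ioc, ← ENNReal.ofReal_mul (div_nonneg hx hm.le)]
        congr 1
        field_simp
      -- done with inner computation
    have hcongr : ∫⁻ x, (∫⁻ u in Set.Ioc (0:ℝ) 1, Set.indicator {p : ℝ × ℝ | t < p.1 * p.2}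
          (fun p => ENNReal.ofReal (p.2 / m)) (u, x)) ∂μ
        = ∫⁻ x, ENNReal.ofReal ((x - t) / m) ∂μ := by
      refine lintegral_congr_ae ?_
      filter_upwards [hμae] with x hx
      exact hx_inner x hx
    rw [hcongr]
    have hdiv : ∀ x : ℝ, ENNReal.ofReal ((x - t) / m)
        = ENNReal.ofReal (x - t) * (ENNReal.ofReal m)⁻¹ := by
      intro x
      rw [ENNReal.ofReal_div_of_pos hm, div_eq_mul_inv]
    simp only [hdiv]
    rw [lintegral_mul_const' _ _ (by simp [hm]), div_eq_mul_inv]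
  -- common facts
  have hF0 : ∫⁻ s in Ioi (0:ℝ), μ (Ioi s) = ENNReal.ofReal m := by
    have h := hlayer 0 le_rfl
    simp only [sub_zero] at h
    rw [← h, hlint_id]
  have hexp_Iic : ∀ (r a : ℝ), 0 < r → expMeasure r (Iic a)
      = ENNReal.ofReal (if 0 ≤ a then 1 - Real.exp (-(r * a)) else 0) := by
    intro r a hr
    have hdef : expMeasure r = volume.withDensity (exponentialPDF r) := rfl
    rw [hdef, withDensity_apply _ measurableSet_Iic,
      lintegral_exponentialPDF_eq_antiDeriv hr a]
  constructor
  · -- forward direction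
    intro h
    have heq : ∀ t : ℝ, 0 ≤ t →
        μ (Ioi t) = (∫⁻ s in Ioi t, μ (Ioi s)) / ENNReal.ofReal m := by
      intro t ht
      calc μ (Ioi t) = (Measure.map (fun ω => U ω * Xhat ω) P) (Ioi t) := by rw [h]
        _ = (∫⁻ s in Ioi t, μ (Ioi s)) / ENNReal.ofReal m := by rw [key t ht, hlayer t ht]
    set f : ℝ → ℝ := fun s => (μ (Ioi s)).toReal with hfdef
    have hganti : Antitone (fun s : ℝ => μ (Ioi s)) :=
      fun a b hab => measure_mono (Ioi_subset_Ioi hab)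
    have hgmeas : Measurable (fun s : ℝ => μ (Ioi s)) := hganti.measurable
    have hf_anti : Antitone f := fun a b hab =>
      ENNReal.toReal_mono (measure_ne_top μ _) (hganti hab)
    have hF_ne : ∀ t : ℝ, 0 ≤ t → (∫⁻ s in Ioi t, μ (Ioi s)) ≠ ⊤ := by
      intro t ht
      have hle : (∫⁻ s in Ioi t, μ (Ioi s)) ≤ ENNReal.ofReal m := by
        rw [← hF0]
        exact lintegral_mono_set (Ioi_subset_Ioi ht)
      exact (lt_of_le_of_lt hle ENNReal.ofReal_lt_top).ne
    have hFoc_ne : ∀ t : ℝ, (∫⁻ s in Ioc 0 t, μ (Ioi s)) ≠ ⊤ := by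
      intro t
      have hle : (∫⁻ s in Ioc 0 t, μ (Ioi s)) ≤ ENNReal.ofReal m := by
        rw [← hF0]
        exact lintegral_mono_set Ioc_subset_Ioi_self
      exact (lt_of_le_of_lt hle ENNReal.ofReal_lt_top).ne
    have hsplit : ∀ t : ℝ, 0 ≤ t →
        (∫⁻ s in Ioc 0 t, μ (Ioi s)) + (∫⁻ s in Ioi t, μ (Ioi s)) = ENNReal.ofReal m := by
      intro t ht
      rw [← lintegral_union measurableSet_Ioi Ioc_disjoint_Ioi_same,
        Ioc_union_Ioi_eq_Ioi ht, hF0]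
    set ψ : ℝ → ℝ := fun t => ∫ s in (0:ℝ)..t, f s with hψdef
    have hreal_Ioc : ∀ t : ℝ, 0 ≤ t → ψ t = (∫⁻ s in Ioc 0 t, μ (Ioi s)).toReal := by
      intro t ht
      show ∫ s in (0:ℝ)..t, f s = _
      rw [intervalIntegral.integral_of_le ht]
      exact integral_toReal hgmeas.aemeasurable.restrict
        (ae_of_all _ fun s => measure_lt_top μ _)
    have hfeq : ∀ t : ℝ, 0 ≤ t → f t = (m - ψ t) / m := by
      intro t ht
      have h1 : f t = (∫⁻ s in Ioi t, μ (Ioi s)).toReal / m := by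
        rw [hfdef]
        simp only
        rw [heq t ht, ENNReal.toReal_div, ENNReal.toReal_ofReal hm.le]
      have h2 : (∫⁻ s in Ioc 0 t, μ (Ioi s)).toReal + (∫⁻ s in Ioi t, μ (Ioi s)).toReal = m := by
        rw [← ENNReal.toReal_add (hFoc_ne t) (hF_ne t ht), hsplit t ht,
          ENNReal.toReal_ofReal hm.le]
      rw [h1, hreal_Ioc t ht]
      congr 1
      linarith
    have hf_ii : ∀ a b : ℝ, IntervalIntegrable f volume a b := fun a b =>
      hf_anti.intervalIntegrable
    have hψcont : Continuous ψ := intervalIntegral.continuous_primitive hf_ii 0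
    have hfcont : ∀ t : ℝ, 0 ≤ t → ContinuousWithinAt f (Ici t) t := by
      intro t ht
      have h1 : ContinuousWithinAt (fun u => (m - ψ u) / m) (Ici t) t :=
        ((continuous_const.sub hψcont).div_const m).continuousWithinAt
      exact h1.congr (fun u hu => hfeq u (ht.trans hu)) (hfeq t ht)
    have hψderiv : ∀ t : ℝ, 0 ≤ t → HasDerivWithinAt ψ (f t) (Ici t) t := by
      intro t ht
      exact intervalIntegral.integral_hasDerivWithinAt_right (hf_ii 0 t)
        hf_anti.measurable.stronglyMeasurable.stronglyMeasurableAtFilter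
        ((hfcont t ht).mono Ioi_subset_Ici_self)
    set H : ℝ → ℝ := fun u => (m - ψ u) * Real.exp (m⁻¹ * u) with hHdef
    have hH0 : H 0 = m := by
      rw [hHdef]
      simp [hψdef, intervalIntegral.integral_same]
    have hHconst : ∀ x : ℝ, 0 ≤ x → H x = m := by
      intro x hx
      have hHcont : ContinuousOn H (Icc 0 x) := by
        apply Continuous.continuousOn
        exact (continuous_const.sub hψcont).mul (Real.continuous_exp.comp
          (continuous_const.mul continuous_id))
      have hHderiv : ∀ t ∈ Ico (0:ℝ) x, HasDerivWithinAt H 0 (Ici t) t := by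
        intro t htx
        have h1 : HasDerivWithinAt (fun u => m - ψ u) (-f t) (Ici t) t :=
          (hψderiv t htx.1).const_sub m
        have h2 : HasDerivAt (fun u => Real.exp (m⁻¹ * u)) (Real.exp (m⁻¹ * t) * (m⁻¹ * 1)) t :=
          HasDerivAt.exp ((hasDerivAt_id t).const_mul m⁻¹)
        have h3 := h1.mul h2.hasDerivWithinAt
        refine h3.congr_deriv ?_
        rw [hfeq t htx.1]
        field_simp
        ring
      have := constant_of_has_deriv_right_zero hHcont hHderiv x ⟨hx, le_rfl⟩
      rw [this, hH0]
    have hf_exp : ∀ x : ℝ, 0 ≤ x → f x = Real.exp (-(m⁻¹ * x)) := by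
      intro x hx
      have h1 := hHconst x hx
      rw [hHdef] at h1
      simp only at h1
      have hexpne : Real.exp (m⁻¹ * x) ≠ 0 := (Real.exp_pos _).ne'
      have h2 : m - ψ x = m * (Real.exp (m⁻¹ * x))⁻¹ := by
        rw [← div_eq_mul_inv]
        exact (eq_div_iff hexpne).2 h1
      rw [hfeq x hx, h2, Real.exp_neg]
      field_simp
    have hμIoi : ∀ x : ℝ, 0 ≤ x → μ (Ioi x) = ENNReal.ofReal (Real.exp (-(m⁻¹ * x))) := by
      intro x hx
      rw [← ENNReal.ofReal_toReal (measure_ne_top μ (Ioi x))]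
      exact congrArg ENNReal.ofReal (hf_exp x hx)
    refine ⟨m⁻¹, inv_pos.2 hm, ?_⟩
    apply Measure.ext_of_Iic
    intro a
    rw [hexp_Iic m⁻¹ a (inv_pos.2 hm)]
    rcases le_or_gt 0 a with ha | ha
    · rw [if_pos ha]
      have hIic : μ (Iic a) = 1 - μ (Ioi a) := by
        rw [← prob_compl_eq_one_sub measurableSet_Ioi, compl_Ioi]
      rw [hIic, hμIoi a ha, ENNReal.ofReal_sub _ (Real.exp_pos _).le, ENNReal.ofReal_one]
    · rw [if_neg (not_le.2 ha), ENNReal.ofReal_zero]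
      exact measure_mono_null (Iic_subset_Iio.2 ha) hμIio
  · -- backward direction
    rintro ⟨r, hr, hXexp⟩
    have hμIic : ∀ a : ℝ, μ (Iic a)
        = ENNReal.ofReal (if 0 ≤ a then 1 - Real.exp (-(r * a)) else 0) := by
      intro a
      rw [hXexp]
      exact hexp_Iic r a hr
    have hμIoi : ∀ s : ℝ, 0 ≤ s → μ (Ioi s) = ENNReal.ofReal (Real.exp (-(r * s))) := by
      intro s hs
      have h1 : μ (Ioi s) = 1 - μ (Iic s) := by
        rw [← prob_compl_eq_one_sub measurableSet_Iic, compl_Iic]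
      rw [h1, hμIic s, if_pos hs, ENNReal.ofReal_sub _ (Real.exp_pos _).le, ENNReal.ofReal_one,
        ENNReal.sub_sub_cancel ENNReal.one_ne_top
          (ENNReal.ofReal_le_one.2 (Real.exp_le_one_iff.2 (by nlinarith)))]
    have hIoiInt : ∀ a : ℝ, 0 ≤ a →
        ∫⁻ s in Ioi a, μ (Ioi s) = ENNReal.ofReal (Real.exp (-(r * a)) / r) := by
      intro a ha
      have h1 : ∫⁻ s in Ioi a, μ (Ioi s)
          = ∫⁻ s in Ioi a, ENNReal.ofReal (Real.exp (-(r * s))) :=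
        setLIntegral_congr_fun measurableSet_Ioi
          (fun s hs => hμIoi s (ha.trans hs.le))
      have h2 : IntegrableOn (fun s => Real.exp (-(r * s))) (Ioi a) := by
        simpa [neg_mul] using exp_neg_integrableOn_Ioi a hr
      rw [h1, ← ofReal_integral_eq_lintegral_ofReal h2
        (ae_of_all _ fun s => (Real.exp_pos _).le), aux_exp_int hr a]
    have hm_eq_r : ENNReal.ofReal m = ENNReal.ofReal (1 / r) := by
      rw [← hF0, hIoiInt 0 le_rfl]
      norm_num
    apply Measure.ext_of_Iic
    intro a
    rcases le_or_gt 0 a with ha | ha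
    · have h1 : (Measure.map (fun ω => U ω * Xhat ω) P) (Iic a)
          = 1 - (Measure.map (fun ω => U ω * Xhat ω) P) (Ioi a) := by
        rw [← prob_compl_eq_one_sub measurableSet_Ioi, compl_Ioi]
      have h2 : μ (Iic a) = 1 - μ (Ioi a) := by
        rw [← prob_compl_eq_one_sub measurableSet_Ioi, compl_Ioi]
      have h3 : (Real.exp (-(r * a)) / r) / (1 / r) = Real.exp (-(r * a)) := by
        field_simp
      rw [h1, h2, key a ha, hlayer a ha, hIoiInt a ha, hμIoi a ha, hm_eq_r,
        ← ENNReal.ofReal_div_of_pos (by positivity), h3]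
    · have hμ0 : μ (Iic a) = 0 := by
        rw [hμIic a, if_neg (not_le.2 ha), ENNReal.ofReal_zero]
      rw [hμ0, Measure.map_apply (show Measurable (fun ω => U ω * Xhat ω) from hmU.mul hmXhat) measurableSet_Iic]
      have hUnn : ∀ᵐ ω ∂P, 0 ≤ U ω := by
        have hz : P (U ⁻¹' (Iio 0)) = 0 := by
          rw [← Measure.map_apply hmU measurableSet_Iio, hU,
            Measure.restrict_apply measurableSet_Iio]
          have hempty : Iio (0:ℝ) ∩ Icc 0 1 = ∅ := by
            ext x
            simp only [mem_inter_iff, mem_Iio, mem_Icc, mem_empty_iff_false, iff_false, not_and]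
            intro h1 h2
            exact absurd h2 (not_le.2 h1)
          rw [hempty, measure_empty]
        rw [ae_iff]
        have hset : {ω | ¬ 0 ≤ U ω} = U ⁻¹' (Iio 0) := by
          ext ω; simp [not_le]
        rw [hset]
        exact hz
      have hXhatnn : ∀ᵐ ω ∂P, 0 ≤ Xhat ω := by
        have hz : P (Xhat ⁻¹' (Iio 0)) = 0 := by
          rw [← Measure.map_apply hmXhat measurableSet_Iio, hsb,
            withDensity_apply _ measurableSet_Iio]
          exact setLIntegral_measure_zero _ _ hμIio
        rw [ae_iff]
        have hset : {ω | ¬ 0 ≤ Xhat ω} = Xhat ⁻¹' (Iio 0) := by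
          ext ω; simp [not_le]
        rw [hset]
        exact hz
      have hae : ∀ᵐ ω ∂P, ω ∉ (fun ω => U ω * Xhat ω) ⁻¹' Iic a := by
        filter_upwards [hUnn, hXhatnn] with ω h1 h2
        simp only [mem_preimage, mem_Iic, not_le]
        exact lt_of_lt_of_le ha (mul_nonneg h1 h2)
      exact measure_eq_zero_iff_ae_notMem.2 hae
end

section
/- Let X and X_1, X_2, … be nonnegative real random variables with positive finite means, and for each n let X̂_n have the size-biased distribution of X_n. Suppose X_n → X in distribution and X̂_n → Y in distribution, where Y is a (proper, real-valued) random variable. Then Y has the size-biased distribution of X. -/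
open MeasureTheory ProbabilityTheory Filter BoundedContinuousFunction
open scoped ENNReal NNReal

noncomputable def truncB (K : ℝ) : ℝ →ᵇ ℝ :=
  BoundedContinuousFunction.mkOfBound
    ⟨fun x => min (max x 0) (max K 0), by continuity⟩ (2 * max K 0)
    (fun x y => by
      have h : ∀ z : ℝ, |min (max z 0) (max K 0)| ≤ max K 0 := fun z => by
        rw [abs_le]
        constructor
        · have : (0:ℝ) ≤ min (max z 0) (max K 0) := le_min (le_max_right _ _) (le_max_right _ _)
          linarith [le_max_right K 0]
        · exact min_le_right _ _
      rw [Real.dist_eq]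
      calc |min (max x 0) (max K 0) - min (max y 0) (max K 0)|
          ≤ |min (max x 0) (max K 0)| + |min (max y 0) (max K 0)| := abs_sub _ _
        _ ≤ 2 * max K 0 := by linarith [h x, h y])

noncomputable def bumpB (K : ℝ) : ℝ →ᵇ ℝ :=
  BoundedContinuousFunction.mkOfBound
    ⟨fun x => min (max (x - K + 1) 0) 1, by continuity⟩ 2
    (fun x y => by
      have h : ∀ z : ℝ, |min (max (z - K + 1) 0) 1| ≤ 1 := fun z => by
        rw [abs_le]
        constructor
        · have : (0:ℝ) ≤ min (max (z - K + 1) 0) 1 := le_min (le_max_right _ _) zero_le_one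
          linarith
        · exact min_le_right _ _
      rw [Real.dist_eq]
      calc |min (max (x - K + 1) 0) 1 - min (max (y - K + 1) 0) 1|
          ≤ |min (max (x - K + 1) 0) 1| + |min (max (y - K + 1) 0) 1| := abs_sub _ _
        _ ≤ 2 := by linarith [h x, h y])

lemma truncB_apply (K x : ℝ) : truncB K x = min (max x 0) (max K 0) := rfl
lemma bumpB_apply (K x : ℝ) : bumpB K x = min (max (x - K + 1) 0) 1 := rfl

lemma truncB_nonneg (K x : ℝ) : 0 ≤ truncB K x :=
  le_min (le_max_right _ _) (le_max_right _ _)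

lemma truncB_le (K x : ℝ) (hx : 0 ≤ x) : truncB K x ≤ x := by
  rw [truncB_apply]; exact (min_le_left _ _).trans (by simp [hx])

lemma truncB_eq (K x : ℝ) (hx : 0 ≤ x) (hK : 0 ≤ K) (hxK : x ≤ K) : truncB K x = x := by
  rw [truncB_apply, max_eq_left hx, max_eq_left hK, min_eq_left hxK]

lemma bumpB_nonneg (K x : ℝ) : 0 ≤ bumpB K x := le_min (le_max_right _ _) zero_le_one
lemma bumpB_le_one (K x : ℝ) : bumpB K x ≤ 1 := min_le_right _ _
lemma bumpB_eq_zero (K x : ℝ) (h : x ≤ K - 1) : bumpB K x = 0 := by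
  rw [bumpB_apply, max_eq_right (by linarith), min_eq_left zero_le_one]

lemma key_ineq (K x : ℝ) (hx : 0 ≤ x) (hK : 0 ≤ K) :
    x - truncB K x ≤ x * bumpB K x := by
  rcases le_or_gt x K with h | h
  · rw [truncB_eq K x hx hK h]
    simpa using mul_nonneg hx (bumpB_nonneg K x)
  · have hb : bumpB K x = 1 := by
      rw [bumpB_apply, min_eq_right]
      rw [le_max_iff]; left; linarith
    rw [hb, mul_one]
    have : 0 ≤ truncB K x := truncB_nonneg K x
    linarith

lemma bcf_comp_integrable {Ω : Type*} [MeasurableSpace Ω] (P : Measure Ω) [IsFiniteMeasure P]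
    (Z : Ω → ℝ) (hmZ : Measurable Z) (g : ℝ →ᵇ ℝ) :
    Integrable (fun ω => g (Z ω)) P := by
  refine Integrable.mono' (integrable_const ‖g‖)
    (g.continuous.measurable.comp hmZ).aestronglyMeasurable ?_
  exact Filter.Eventually.of_forall fun ω => g.norm_coe_le_norm _

lemma mulg_integrable {Ω : Type*} [MeasurableSpace Ω] (P : Measure Ω)
    (Z : Ω → ℝ) (hmZ : Measurable Z) (hint : Integrable Z P) (g : ℝ →ᵇ ℝ) :
    Integrable (fun ω => Z ω * g (Z ω)) P := by
  refine Integrable.mono' (hint.abs.mul_const ‖g‖)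
    (hmZ.mul (g.continuous.measurable.comp hmZ)).aestronglyMeasurable ?_
  refine Filter.Eventually.of_forall fun ω => ?_
  rw [Real.norm_eq_abs, abs_mul]
  exact mul_le_mul_of_nonneg_left (g.norm_coe_le_norm _) (abs_nonneg _)

lemma wd_int {Ω : Type*} [MeasurableSpace Ω] (P : Measure Ω) [IsProbabilityMeasure P]
    (Z : Ω → ℝ) (hmZ : Measurable Z) (hnn : ∀ ω, 0 ≤ Z ω)
    (hpos : 0 < ∫ ω, Z ω ∂P) (g : ℝ →ᵇ ℝ) :
    ∫ x, g x ∂((Measure.map Z P).withDensity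
        (fun x => ENNReal.ofReal (x / ∫ ω, Z ω ∂P)))
      = (∫ ω, Z ω * g (Z ω) ∂P) / (∫ ω, Z ω ∂P) := by
  set m := ∫ ω, Z ω ∂P with hm
  have hw : (fun x : ℝ => ENNReal.ofReal (x / m)) =
      fun x : ℝ => ((Real.toNNReal (x / m) : ℝ≥0) : ℝ≥0∞) := rfl
  rw [hw, integral_withDensity_eq_integral_smul
    ((measurable_id'.div_const m).real_toNNReal) g]
  have h2 : ∫ x, Real.toNNReal (x / m) • g x ∂(Measure.map Z P)
      = ∫ ω, Real.toNNReal (Z ω / m) • g (Z ω) ∂P := by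
    refine integral_map hmZ.aemeasurable ?_
    exact (Continuous.smul (continuous_real_toNNReal.comp
      (continuous_id.div_const m)) g.continuous).aestronglyMeasurable
  rw [h2]
  have h3 : ∀ ω, Real.toNNReal (Z ω / m) • g (Z ω) = (Z ω * g (Z ω)) / m := by
    intro ω
    rw [NNReal.smul_def, Real.coe_toNNReal _ (div_nonneg (hnn ω) hpos.le)]
    rw [smul_eq_mul]; ring
  simp_rw [h3]
  rw [integral_div]

lemma sb_int {Ω : Type*} [MeasurableSpace Ω] (P : Measure Ω) [IsProbabilityMeasure P]
    (Z Zh : Ω → ℝ) (hmZ : Measurable Z) (hmZh : Measurable Zh) (hnn : ∀ ω, 0 ≤ Z ω)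
    (hpos : 0 < ∫ ω, Z ω ∂P)
    (h : Measure.map Zh P =
      (Measure.map Z P).withDensity (fun x => ENNReal.ofReal (x / ∫ ω, Z ω ∂P)))
    (g : ℝ →ᵇ ℝ) :
    ∫ ω, g (Zh ω) ∂P = (∫ ω, Z ω * g (Z ω) ∂P) / (∫ ω, Z ω ∂P) := by
  have h1 : ∫ ω, g (Zh ω) ∂P = ∫ x, g x ∂(Measure.map Zh P) :=
    (integral_map hmZh.aemeasurable g.continuous.aestronglyMeasurable).symm
  rw [h1, h, wd_int P Z hmZ hnn hpos g]

/-- If nonnegative random variables `Xs n` (with positive finite means) converge in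
distribution to `X` (with positive finite mean), and the size-biased versions
`Xhats n` converge in distribution to a proper random variable `Y`, then `Y` has
the size-biased distribution of `X`. -/
theorem stmt_12
    {Ω : Type*} [MeasurableSpace Ω] (P : Measure Ω) [IsProbabilityMeasure P]
    (X Y : Ω → ℝ) (Xs Xhats : ℕ → Ω → ℝ)
    (hmX : Measurable X) (hmY : Measurable Y)
    (hmXs : ∀ n, Measurable (Xs n)) (hmXhats : ∀ n, Measurable (Xhats n))
    (hnnX : ∀ ω, 0 ≤ X ω) (hnnXs : ∀ n ω, 0 ≤ Xs n ω)
    (hXint : Integrable X P) (hXpos : 0 < ∫ ω, X ω ∂P)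
    (hXsint : ∀ n, Integrable (Xs n) P) (hXspos : ∀ n, 0 < ∫ ω, Xs n ω ∂P)
    -- each `Xhats n` has the size-biased distribution of `Xs n`:
    (hsb : ∀ n, Measure.map (Xhats n) P =
      (Measure.map (Xs n) P).withDensity
        (fun x => ENNReal.ofReal (x / ∫ ω, Xs n ω ∂P)))
    -- `Xs n → X` in distribution:
    (hconvX : ∀ f : ℝ →ᵇ ℝ,
      Tendsto (fun n => ∫ ω, f (Xs n ω) ∂P) atTop (nhds (∫ ω, f (X ω) ∂P)))
    -- `Xhats n → Y` in distribution:
    (hconvY : ∀ f : ℝ →ᵇ ℝ,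
      Tendsto (fun n => ∫ ω, f (Xhats n ω) ∂P) atTop (nhds (∫ ω, f (Y ω) ∂P))) :
    Measure.map Y P =
      (Measure.map X P).withDensity
        (fun x => ENNReal.ofReal (x / ∫ ω, X ω ∂P)) := by
  -- tail of Y vanishes
  have tail_Y : Tendsto (fun K : ℕ => ∫ ω, bumpB K (Y ω) ∂P) atTop (nhds 0) := by
    have h0 : (0:ℝ) = ∫ (_ : Ω), (0:ℝ) ∂P := by simp
    rw [h0]
    refine tendsto_integral_of_dominated_convergence (fun _ => (1:ℝ))
      (fun K => ((bumpB K).continuous.measurable.comp hmY).aestronglyMeasurable)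
      (integrable_const 1) (fun K => Filter.Eventually.of_forall fun ω => ?_)
      (Filter.Eventually.of_forall fun ω => ?_)
    · show ‖bumpB (K:ℝ) (Y ω)‖ ≤ (1:ℝ)
      rw [Real.norm_eq_abs, abs_le]
      exact ⟨by linarith [bumpB_nonneg (K:ℝ) (Y ω)], bumpB_le_one _ _⟩
    · refine Tendsto.congr' ?_ tendsto_const_nhds
      filter_upwards [eventually_ge_atTop ⌈Y ω + 1⌉₊] with K hK
      refine (bumpB_eq_zero _ _ ?_).symm
      have h1 : Y ω + 1 ≤ (⌈Y ω + 1⌉₊ : ℝ) := Nat.le_ceil _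
      have h2 : ((⌈Y ω + 1⌉₊ : ℕ) : ℝ) ≤ (K : ℝ) := Nat.cast_le.2 hK
      linarith
  -- truncated expectations over X converge as K → ∞
  have hD : ∀ g : ℝ →ᵇ ℝ, Tendsto (fun K : ℕ => ∫ ω, truncB K (X ω) * g (X ω) ∂P)
      atTop (nhds (∫ ω, X ω * g (X ω) ∂P)) := by
    intro g
    refine tendsto_integral_of_dominated_convergence (fun ω => X ω * ‖g‖)
      (fun K => (((truncB K).continuous.measurable.comp hmX).mul
        (g.continuous.measurable.comp hmX)).aestronglyMeasurable)
      (hXint.mul_const _) (fun K => Filter.Eventually.of_forall fun ω => ?_)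
      (Filter.Eventually.of_forall fun ω => ?_)
    · show ‖truncB (K:ℝ) (X ω) * g (X ω)‖ ≤ X ω * ‖g‖
      rw [Real.norm_eq_abs, abs_mul, abs_of_nonneg (truncB_nonneg _ _)]
      refine mul_le_mul (truncB_le _ _ (hnnX ω)) ?_ (abs_nonneg _) (hnnX ω)
      simpa [Real.norm_eq_abs] using g.norm_coe_le_norm (X ω)
    · refine Tendsto.congr' ?_ tendsto_const_nhds
      filter_upwards [eventually_ge_atTop ⌈X ω⌉₊] with K hK
      rw [truncB_eq _ _ (hnnX ω) (Nat.cast_nonneg K)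
        ((Nat.le_ceil _).trans (Nat.cast_le.2 hK))]
  -- tail bound for Xs n
  have hB : ∀ (n K : ℕ), (∫ ω, Xs n ω ∂P) - ∫ ω, truncB K (Xs n ω) ∂P ≤
      (∫ ω, Xs n ω ∂P) * ∫ ω, bumpB K (Xhats n ω) ∂P := by
    intro n K
    rw [sb_int P (Xs n) (Xhats n) (hmXs n) (hmXhats n) (hnnXs n) (hXspos n) (hsb n) (bumpB K),
      mul_comm, div_mul_cancel₀ _ (ne_of_gt (hXspos n))]
    rw [← integral_sub (hXsint n) (bcf_comp_integrable P (Xs n) (hmXs n) (truncB K))]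
    exact integral_mono ((hXsint n).sub (bcf_comp_integrable P (Xs n) (hmXs n) (truncB K)))
      (mulg_integrable P (Xs n) (hmXs n) (hXsint n) (bumpB K))
      (fun ω => key_ineq _ _ (hnnXs n ω) (Nat.cast_nonneg K))
  -- eventual bound on the means
  have hM : ∃ M : ℝ, 0 < M ∧ ∀ᶠ n in atTop, (∫ ω, Xs n ω ∂P) ≤ M := by
    obtain ⟨K₀, hK₀⟩ := (tail_Y.eventually_lt_const (by norm_num : (0:ℝ) < 1/2)).exists
    refine ⟨2 * ((∫ ω, truncB K₀ (X ω) ∂P) + 1), ?_, ?_⟩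
    · have : 0 ≤ ∫ ω, truncB K₀ (X ω) ∂P := integral_nonneg fun ω => truncB_nonneg _ _
      linarith
    · have h1 := (hconvX (truncB K₀)).eventually_lt_const
        (lt_add_one (∫ ω, truncB K₀ (X ω) ∂P))
      have h2 := (hconvY (bumpB K₀)).eventually_lt_const hK₀
      filter_upwards [h1, h2] with n h1 h2
      have hb := hB n K₀
      have hmnpos := hXspos n
      nlinarith [mul_le_mul_of_nonneg_left h2.le hmnpos.le]
  -- main convergence of size-biased integrands
  have hS : ∀ g : ℝ →ᵇ ℝ, Tendsto (fun n => ∫ ω, Xs n ω * g (Xs n ω) ∂P)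
      atTop (nhds (∫ ω, X ω * g (X ω) ∂P)) := by
    intro g
    obtain ⟨M, hMpos, hMev⟩ := hM
    rw [Metric.tendsto_nhds]
    intro ε hε
    have hg1 : (0:ℝ) < ‖g‖ + 1 := by positivity
    set δ := ε / (3 * M * (‖g‖ + 1)) with hδ
    have hδpos : 0 < δ := by positivity
    obtain ⟨K, hKb, hKd⟩ := ((tail_Y.eventually_lt_const hδpos).and
      ((Metric.tendsto_nhds.1 (hD g)) (ε/3) (by linarith))).exists
    have e1 := (Metric.tendsto_nhds.1 (hconvX (truncB K * g))) (ε/3) (by linarith)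
    have e2 := (hconvY (bumpB K)).eventually_lt_const hKb
    filter_upwards [e1, e2, hMev] with n h1 h2 h3
    have hcm : ∀ Z : Ω → ℝ, (fun ω => (truncB (K:ℝ) * g) (Z ω)) =
        fun ω => truncB (K:ℝ) (Z ω) * g (Z ω) := fun Z => rfl
    have hint1 : Integrable (fun ω => Xs n ω * g (Xs n ω)) P :=
      mulg_integrable P (Xs n) (hmXs n) (hXsint n) g
    have hint2 : Integrable (fun ω => truncB (K:ℝ) (Xs n ω) * g (Xs n ω)) P := by
      have := bcf_comp_integrable P (Xs n) (hmXs n) (truncB K * g)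
      rwa [hcm] at this
    have hintt : Integrable (fun ω => truncB (K:ℝ) (Xs n ω)) P :=
      bcf_comp_integrable P (Xs n) (hmXs n) (truncB K)
    -- first term
    have key1 : |(∫ ω, Xs n ω * g (Xs n ω) ∂P) - ∫ ω, truncB (K:ℝ) (Xs n ω) * g (Xs n ω) ∂P|
        ≤ ((∫ ω, Xs n ω ∂P) - ∫ ω, truncB (K:ℝ) (Xs n ω) ∂P) * ‖g‖ := by
      rw [← integral_sub hint1 hint2]
      have step1 : |∫ ω, (Xs n ω * g (Xs n ω) - truncB (K:ℝ) (Xs n ω) * g (Xs n ω)) ∂P|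
          ≤ ∫ ω, |Xs n ω * g (Xs n ω) - truncB (K:ℝ) (Xs n ω) * g (Xs n ω)| ∂P := by
        simpa [Real.norm_eq_abs] using
          norm_integral_le_integral_norm
            (fun ω => Xs n ω * g (Xs n ω) - truncB (K:ℝ) (Xs n ω) * g (Xs n ω)) (μ := P)
      refine step1.trans ?_
      rw [← integral_sub (hXsint n) hintt, ← integral_mul_const]
      refine integral_mono (hint1.sub hint2).abs (((hXsint n).sub hintt).mul_const _) fun ω => ?_
      have hd : 0 ≤ Xs n ω - truncB (K:ℝ) (Xs n ω) :=
        sub_nonneg.2 (truncB_le _ _ (hnnXs n ω))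
      have : Xs n ω * g (Xs n ω) - truncB (K:ℝ) (Xs n ω) * g (Xs n ω)
          = (Xs n ω - truncB (K:ℝ) (Xs n ω)) * g (Xs n ω) := by ring
      rw [this, abs_mul, abs_of_nonneg hd]
      refine mul_le_mul_of_nonneg_left ?_ hd
      simpa [Real.norm_eq_abs] using g.norm_coe_le_norm (Xs n ω)
    have hbn0 : 0 ≤ ∫ ω, bumpB (K:ℝ) (Xhats n ω) ∂P :=
      integral_nonneg fun ω => bumpB_nonneg _ _
    have key2 : (∫ ω, Xs n ω ∂P) - ∫ ω, truncB (K:ℝ) (Xs n ω) ∂P ≤ M * δ :=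
      (hB n K).trans (mul_le_mul h3 h2.le hbn0 (le_trans (hXspos n).le h3))
    have hMδ : M * δ * (‖g‖ + 1) = ε / 3 := by
      rw [hδ]; field_simp
    have keyA : |(∫ ω, Xs n ω * g (Xs n ω) ∂P)
        - ∫ ω, truncB (K:ℝ) (Xs n ω) * g (Xs n ω) ∂P| ≤ ε / 3 := by
      refine key1.trans ?_
      have hd0 : 0 ≤ (∫ ω, Xs n ω ∂P) - ∫ ω, truncB (K:ℝ) (Xs n ω) ∂P := by
        rw [← integral_sub (hXsint n) hintt]
        exact integral_nonneg fun ω => sub_nonneg.2 (truncB_le _ _ (hnnXs n ω))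
      calc ((∫ ω, Xs n ω ∂P) - ∫ ω, truncB (K:ℝ) (Xs n ω) ∂P) * ‖g‖
          ≤ (M * δ) * (‖g‖ + 1) := by
            refine mul_le_mul key2 (by linarith [norm_nonneg g]) (norm_nonneg g) ?_
            positivity
        _ = ε / 3 := hMδ
    -- combine
    rw [Real.dist_eq]
    rw [hcm (Xs n), hcm X] at h1
    rw [Real.dist_eq] at h1 hKd
    linarith [abs_sub_le (∫ ω, Xs n ω * g (Xs n ω) ∂P)
        (∫ ω, truncB (K:ℝ) (Xs n ω) * g (Xs n ω) ∂P) (∫ ω, X ω * g (X ω) ∂P),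
      abs_sub_le (∫ ω, truncB (K:ℝ) (Xs n ω) * g (Xs n ω) ∂P)
        (∫ ω, truncB (K:ℝ) (X ω) * g (X ω) ∂P) (∫ ω, X ω * g (X ω) ∂P), keyA]
  -- limit of means
  have hmn : Tendsto (fun n => ∫ ω, Xs n ω ∂P) atTop (nhds (∫ ω, X ω ∂P)) := by
    have := hS 1
    simpa using this
  have hY : ∀ g : ℝ →ᵇ ℝ,
      ∫ ω, g (Y ω) ∂P = (∫ ω, X ω * g (X ω) ∂P) / ∫ ω, X ω ∂P := by
    intro g
    refine tendsto_nhds_unique (hconvY g) ?_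
    have h2 := (hS g).div hmn (ne_of_gt hXpos)
    exact h2.congr fun n =>
      (sb_int P (Xs n) (Xhats n) (hmXs n) (hmXhats n) (hnnXs n) (hXspos n) (hsb n) g).symm
  haveI : IsProbabilityMeasure (Measure.map Y P) := Measure.isProbabilityMeasure_map hmY.aemeasurable
  have hIntdens : Integrable (fun x => x / ∫ ω, X ω ∂P) (Measure.map X P) := by
    rw [integrable_map_measure (measurable_id'.div_const _).aestronglyMeasurable hmX.aemeasurable]
    exact hXint.div_const _
  haveI : IsFiniteMeasure ((Measure.map X P).withDensity
      fun x => ENNReal.ofReal (x / ∫ ω, X ω ∂P)) :=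
    isFiniteMeasure_withDensity_ofReal hIntdens.2
  refine ext_of_forall_lintegral_eq_of_IsFiniteMeasure fun f => ?_
  have lip : LipschitzWith 1 ((↑) : ℝ≥0 → ℝ) :=
    LipschitzWith.of_dist_le_mul fun x y => by
      simp [NNReal.dist_eq, Real.dist_eq]
  set gR : ℝ →ᵇ ℝ := BoundedContinuousFunction.comp _ lip f with hgRdef
  have hco : (fun x : ℝ => ((f x : ℝ≥0) : ℝ)) = fun x => gR x := rfl
  have hL : ∫⁻ x, (f x : ℝ≥0∞) ∂(Measure.map Y P)
      = ENNReal.ofReal (∫ x, gR x ∂(Measure.map Y P)) := by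
    rw [lintegral_coe_eq_integral (fun x => f x)
      (integrable_of_nnreal _ f), hco]
  have hR : ∫⁻ x, (f x : ℝ≥0∞) ∂((Measure.map X P).withDensity
        fun x => ENNReal.ofReal (x / ∫ ω, X ω ∂P))
      = ENNReal.ofReal (∫ x, gR x ∂((Measure.map X P).withDensity
        fun x => ENNReal.ofReal (x / ∫ ω, X ω ∂P))) := by
    rw [lintegral_coe_eq_integral (fun x => f x)
      (integrable_of_nnreal _ f), hco]
  rw [hL, hR]
  congr 1
  have hLY : ∫ x, gR x ∂(Measure.map Y P) = ∫ ω, gR (Y ω) ∂P :=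
    integral_map hmY.aemeasurable gR.continuous.aestronglyMeasurable
  rw [hLY, hY gR, wd_int P X hmX hnnX hXpos gR]
end

section
/- Let τ be an ergodic measure-preserving transformation of a probability space (X, μ), and let f be a nonnegative measurable function on X. Then limsup_{n→∞} f(τ^n(x))/n is either 0 for μ-almost every x or ∞ for μ-almost every x. -/
open MeasureTheory Filter Set Function
open scoped ENNReal NNReal

namespace TannyAux

set_option linter.unusedSectionVars false

variable {X : Type*} [MeasurableSpace X]

/-- First return time (`≥ 1`) of `x` to `A` under `τ`; `0` if the orbit never returns. -/
noncomputable def ret (τ : X → X) (A : Set X) (x : X) : ℕ :=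
  sInf {n : ℕ | 0 < n ∧ τ^[n] x ∈ A}

/-- The induced (first-return) map. -/
noncomputable def ind (τ : X → X) (A : Set X) (x : X) : X := τ^[ret τ A x] x

variable {τ : X → X} {A : Set X}

lemma ret_spec {x : X} (h : ret τ A x ≠ 0) : τ^[ret τ A x] x ∈ A := by
  have hne : {n : ℕ | 0 < n ∧ τ^[n] x ∈ A}.Nonempty := by
    by_contra hc
    rw [not_nonempty_iff_eq_empty] at hc
    simp only [ret, hc, Nat.sInf_empty] at h
    exact h rfl
  exact (Nat.sInf_mem hne).2

lemma ind_mem {x : X} (h : ret τ A x ≠ 0) : ind τ A x ∈ A := ret_spec h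

lemma ret_min {x : X} {k : ℕ} (hk : 0 < k) (hlt : k < ret τ A x) : τ^[k] x ∉ A :=
  fun hmem => Nat.notMem_of_lt_sInf hlt ⟨hk, hmem⟩

lemma ret_le {x : X} {t : ℕ} (ht : 0 < t) (hmem : τ^[t] x ∈ A) : ret τ A x ≤ t :=
  Nat.sInf_le ⟨ht, hmem⟩

lemma ret_eq_zero_iff {x : X} : ret τ A x = 0 ↔ ∀ k, 0 < k → τ^[k] x ∉ A := by
  constructor
  · intro h k hk hmem
    have hne : {n : ℕ | 0 < n ∧ τ^[n] x ∈ A}.Nonempty := ⟨k, hk, hmem⟩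
    have hpos : 0 < ret τ A x := (Nat.sInf_mem hne).1
    omega
  · intro h
    by_contra h0
    exact h _ (Nat.pos_of_ne_zero h0) (ret_spec h0)

lemma measurable_ret (hτ : Measurable τ) (hA : MeasurableSet A) : Measurable (ret τ A) := by
  have key : ∀ n : ℕ, MeasurableSet (ret τ A ⁻¹' {n}) := by
    intro n
    rcases Nat.eq_zero_or_pos n with rfl | hn
    · have : ret τ A ⁻¹' {0} = ⋂ (k : ℕ), ⋂ (_ : 0 < k), τ^[k] ⁻¹' Aᶜ := by
        ext x
        simp only [mem_preimage, mem_singleton_iff, mem_iInter, mem_compl_iff,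
          ret_eq_zero_iff]
      rw [this]
      exact MeasurableSet.iInter fun k => MeasurableSet.iInter fun _ =>
        (hτ.iterate k) hA.compl
    · have : ret τ A ⁻¹' {n} =
          (τ^[n] ⁻¹' A) ∩ ⋂ (k : ℕ), ⋂ (_ : 0 < k), ⋂ (_ : k < n), τ^[k] ⁻¹' Aᶜ := by
        ext x
        simp only [mem_preimage, mem_singleton_iff, mem_inter_iff, mem_iInter, mem_compl_iff]
        constructor
        · rintro rfl
          exact ⟨ret_spec (by omega), fun k hk hlt => ret_min hk hlt⟩
        · rintro ⟨hmem, hmin⟩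
          have hle : ret τ A x ≤ n := ret_le hn hmem
          have hne : ret τ A x ≠ 0 := fun h0 => (ret_eq_zero_iff.mp h0) n hn hmem
          have := ret_spec hne
          by_contra hne2
          exact hmin _ (Nat.pos_of_ne_zero hne) (by omega) this
      rw [this]
      exact ((hτ.iterate n) hA).inter <| MeasurableSet.iInter fun k =>
        MeasurableSet.iInter fun _ => MeasurableSet.iInter fun _ => (hτ.iterate k) hA.compl
  exact measurable_to_nat fun y => key _

lemma measurable_ind (hτ : Measurable τ) (hA : MeasurableSet A) : Measurable (ind τ A) := by
  intro s hs
  have : ind τ A ⁻¹' s = ⋃ n : ℕ, (ret τ A ⁻¹' {n}) ∩ τ^[n] ⁻¹' s := by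
    ext x
    simp only [mem_preimage, mem_iUnion, mem_inter_iff, mem_singleton_iff, ind]
    constructor
    · intro h; exact ⟨ret τ A x, rfl, h⟩
    · rintro ⟨n, rfl, h⟩; exact h
  rw [this]
  exact MeasurableSet.iUnion fun n =>
    ((measurable_ret hτ hA) (measurableSet_singleton n)).inter ((hτ.iterate n) hs)


/-- Points of `A` whose return chain is alive for `j` steps and whose `j`-th induced
iterate lies in `s`. -/
def chain (τ : X → X) (A : Set X) (j : ℕ) (s : Set X) : Set X :=
  A ∩ (⋂ i ∈ Finset.range j, {x | ret τ A ((ind τ A)^[i] x) ≠ 0}) ∩ ((ind τ A)^[j]) ⁻¹' s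

lemma mem_chain {j : ℕ} {s : Set X} {x : X} :
    x ∈ chain τ A j s ↔
      x ∈ A ∧ (∀ i < j, ret τ A ((ind τ A)^[i] x) ≠ 0) ∧ (ind τ A)^[j] x ∈ s := by
  simp only [chain, mem_inter_iff, mem_iInter, Finset.mem_range, mem_preimage, mem_setOf_eq]
  tauto

lemma measurable_chain (hτ : Measurable τ) (hA : MeasurableSet A) (j : ℕ) {s : Set X}
    (hs : MeasurableSet s) : MeasurableSet (chain τ A j s) := by
  refine (hA.inter ?_).inter (((measurable_ind hτ hA).iterate j) hs)
  refine MeasurableSet.biInter (Finset.range j).countable_toSet fun i _ => ?_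
  have : {x | ret τ A ((ind τ A)^[i] x) ≠ 0} = ((ind τ A)^[i]) ⁻¹' (ret τ A ⁻¹' {0})ᶜ := by
    ext x; simp [mem_preimage]
  rw [this]
  exact ((measurable_ind hτ hA).iterate i)
    ((measurable_ret hτ hA) (measurableSet_singleton 0)).compl

variable {μ : Measure X} [IsProbabilityMeasure μ]

/-- The induced map preserves `μ` on subsets of `A`. -/
lemma ind_measure (hτ : Measurable τ) (hpres : MeasurePreserving τ μ μ)
    (hA : MeasurableSet A) {s : Set X} (hs : MeasurableSet s) (hsA : s ⊆ A) :
    μ {x | x ∈ A ∧ ret τ A x ≠ 0 ∧ ind τ A x ∈ s} = μ s := by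
  set N : Set X := {x | ∃ t, 0 < t ∧ τ^[t] x ∈ s ∧ ∀ k, 0 < k → k < t → τ^[k] x ∉ A} with hN
  have hNm : MeasurableSet N := by
    have : N = ⋃ (t : ℕ), ⋃ (_ : 0 < t),
        (τ^[t] ⁻¹' s ∩ ⋂ (k : ℕ), ⋂ (_ : 0 < k), ⋂ (_ : k < t), τ^[k] ⁻¹' Aᶜ) := by
      ext x
      simp only [hN, mem_setOf_eq, mem_iUnion, mem_inter_iff, mem_preimage, mem_iInter,
        mem_compl_iff]
      tauto
    rw [this]
    exact MeasurableSet.iUnion fun t => MeasurableSet.iUnion fun _ =>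
      ((hτ.iterate t) hs).inter <| MeasurableSet.iInter fun k => MeasurableSet.iInter fun _ =>
        MeasurableSet.iInter fun _ => (hτ.iterate k) hA.compl
  have key : τ ⁻¹' (s ∪ (N \ A)) = N := by
    ext x
    simp only [mem_preimage, mem_union, mem_diff, hN, mem_setOf_eq]
    constructor
    · rintro (hxs | ⟨⟨t, ht, hts, hmin⟩, hna⟩)
      · exact ⟨1, one_pos, by simpa using hxs, fun k hk hlt => by omega⟩
      · refine ⟨t + 1, Nat.succ_pos t, by rwa [Function.iterate_succ_apply], ?_⟩
        intro k hk hlt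
        rcases Nat.exists_eq_add_of_lt hk with ⟨k', rfl⟩
        simp only [Nat.zero_add] at *
        rcases Nat.eq_zero_or_pos k' with rfl | hk'
        · simpa using hna
        · rw [Function.iterate_succ_apply]
          exact hmin k' hk' (by omega)
    · rintro ⟨t, ht, hts, hmin⟩
      rcases eq_or_lt_of_le (Nat.one_le_iff_ne_zero.mpr (Nat.pos_iff_ne_zero.mp ht)) with h1 | h1
      · left
        rw [← h1] at hts
        simpa using hts
      · right
        refine ⟨⟨t - 1, by omega, ?_, ?_⟩, ?_⟩
        · have h2 : t - 1 + 1 = t := by omega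
          rw [← h2] at hts
          rw [Function.iterate_succ_apply] at hts
          exact hts
        · intro k hk hlt
          have := hmin (k + 1) (by omega) (by omega)
          rw [Function.iterate_succ_apply] at this
          exact this
        · have := hmin 1 one_pos h1
          simpa using this
  have hdisj : Disjoint s (N \ A) :=
    Set.disjoint_left.mpr fun x hxs hxNA => hxNA.2 (hsA hxs)
  have hmeasN : μ N = μ s + μ (N \ A) := by
    conv_lhs => rw [← key]
    rw [hpres.measure_preimage (hs.union (hNm.diff hA)).nullMeasurableSet,
      measure_union hdisj (hNm.diff hA)]
  have hsplit : μ (N ∩ A) + μ (N \ A) = μ N := measure_inter_add_diff N hA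
  have hNA : N ∩ A = {x | x ∈ A ∧ ret τ A x ≠ 0 ∧ ind τ A x ∈ s} := by
    ext x
    simp only [mem_inter_iff, hN, mem_setOf_eq]
    constructor
    · rintro ⟨⟨t, ht, hts, hmin⟩, hxA⟩
      have hne : ret τ A x ≠ 0 := fun h0 => (ret_eq_zero_iff.mp h0) t ht (hsA hts)
      have hle : ret τ A x ≤ t := ret_le ht (hsA hts)
      have heq : ret τ A x = t := by
        by_contra hne2
        exact hmin _ (Nat.pos_of_ne_zero hne) (by omega) (ret_spec hne)
      exact ⟨hxA, hne, by rw [ind, heq]; exact hts⟩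
    · rintro ⟨hxA, hne, hmem⟩
      exact ⟨⟨ret τ A x, Nat.pos_of_ne_zero hne, hmem,
        fun k hk hlt => ret_min hk hlt⟩, hxA⟩
  have hfin : μ (N \ A) ≠ ⊤ := (measure_lt_top μ _).ne
  have : μ (N ∩ A) + μ (N \ A) = μ s + μ (N \ A) := by rw [hsplit, hmeasN]
  have hcancel : μ (N ∩ A) = μ s := by
    exact WithTop.add_right_cancel hfin this
  rw [← hNA]
  exact hcancel

/-- Iterated version: the `j`-fold induced map preserves `μ` on subsets of `A`. -/
lemma chain_measure (hτ : Measurable τ) (hpres : MeasurePreserving τ μ μ)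
    (hA : MeasurableSet A) (j : ℕ) {s : Set X} (hs : MeasurableSet s) (hsA : s ⊆ A) :
    μ (chain τ A j s) = μ s := by
  induction j generalizing s with
  | zero =>
    have : chain τ A 0 s = s := by
      ext x
      rw [mem_chain]
      simp only [Nat.not_lt_zero, IsEmpty.forall_iff, implies_true, true_and,
        Function.iterate_zero_apply]
      exact ⟨fun h => h.2, fun h => ⟨hsA h, h⟩⟩
    rw [this]
  | succ j ih =>
    set s' : Set X := chain τ A j s with hs'
    have hs'm : MeasurableSet s' := measurable_chain hτ hA j hs
    have hs'A : s' ⊆ A := fun x hx => (mem_chain.mp hx).1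
    have hstep : chain τ A (j + 1) s = {x | x ∈ A ∧ ret τ A x ≠ 0 ∧ ind τ A x ∈ s'} := by
      ext x
      rw [mem_chain]
      simp only [mem_setOf_eq, hs', mem_chain]
      constructor
      · rintro ⟨hxA, halive, hmem⟩
        have h0 : ret τ A x ≠ 0 := by
          have := halive 0 (Nat.succ_pos j)
          simpa using this
        refine ⟨hxA, h0, ind_mem h0, ?_, ?_⟩
        · intro i hi
          have := halive (i + 1) (by omega)
          rwa [Function.iterate_succ_apply] at this
        · rwa [Function.iterate_succ_apply] at hmem
      · rintro ⟨hxA, h0, _, halive, hmem⟩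
        refine ⟨hxA, ?_, ?_⟩
        · intro i hi
          rcases Nat.eq_zero_or_pos i with rfl | hipos
          · simpa using h0
          · rcases Nat.exists_eq_add_of_lt hipos with ⟨i', rfl⟩
            simp only [Nat.zero_add] at *
            have := halive i' (by omega)
            rwa [← Function.iterate_succ_apply] at this
        · rwa [Function.iterate_succ_apply]
    rw [hstep, ind_measure hτ hpres hA hs'm hs'A, ih hs hsA]


/-- `G n` : points of `A` not returning to `A` within times `1..n`. -/
def Gset (τ : X → X) (A : Set X) (n : ℕ) : Set X :=
  A ∩ ⋂ (k : ℕ), ⋂ (_ : 0 < k), ⋂ (_ : k ≤ n), τ^[k] ⁻¹' Aᶜ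

/-- `F n` : points not visiting `A` at times `0..n-1`. -/
def Fset (τ : X → X) (A : Set X) (n : ℕ) : Set X :=
  ⋂ (k : ℕ), ⋂ (_ : k < n), τ^[k] ⁻¹' Aᶜ

lemma mem_Gset {n : ℕ} {x : X} :
    x ∈ Gset τ A n ↔ x ∈ A ∧ ∀ k, 0 < k → k ≤ n → τ^[k] x ∉ A := by
  simp [Gset, mem_iInter]

lemma mem_Fset {n : ℕ} {x : X} :
    x ∈ Fset τ A n ↔ ∀ k, k < n → τ^[k] x ∉ A := by
  simp [Fset, mem_iInter]

lemma measurable_Gset (hτ : Measurable τ) (hA : MeasurableSet A) (n : ℕ) :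
    MeasurableSet (Gset τ A n) :=
  hA.inter <| MeasurableSet.iInter fun k => MeasurableSet.iInter fun _ =>
    MeasurableSet.iInter fun _ => (hτ.iterate k) hA.compl

lemma measurable_Fset (hτ : Measurable τ) (hA : MeasurableSet A) (n : ℕ) :
    MeasurableSet (Fset τ A n) :=
  MeasurableSet.iInter fun k => MeasurableSet.iInter fun _ => (hτ.iterate k) hA.compl

lemma Gset_anti {m n : ℕ} (h : m ≤ n) : Gset τ A n ⊆ Gset τ A m := by
  intro x hx
  rw [mem_Gset] at hx ⊢
  exact ⟨hx.1, fun k hk hkm => hx.2 k hk (hkm.trans h)⟩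

lemma Gset_subset_A {n : ℕ} : Gset τ A n ⊆ A := fun x hx => (mem_Gset.mp hx).1

lemma preimage_Fset (n : ℕ) :
    τ ⁻¹' (Fset τ A n) = Gset τ A n ∪ Fset τ A (n + 1) := by
  ext x
  simp only [mem_preimage, mem_Fset, mem_union, mem_Gset]
  constructor
  · intro h
    have hmain : ∀ k, 0 < k → k ≤ n → τ^[k] x ∉ A := by
      intro k hk hkn
      rcases Nat.exists_eq_add_of_lt hk with ⟨k', rfl⟩
      simp only [Nat.zero_add] at *
      have := h k' (by omega)
      rw [Function.iterate_succ_apply]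
      exact this
    by_cases hxA : x ∈ A
    · exact Or.inl ⟨hxA, hmain⟩
    · refine Or.inr fun k hk => ?_
      rcases Nat.eq_zero_or_pos k with rfl | hkpos
      · simpa using hxA
      · exact hmain k hkpos (by omega)
  · intro h k hkn
    have : τ^[k] (τ x) = τ^[k + 1] x := (Function.iterate_succ_apply τ k x).symm
    rw [this]
    rcases h with ⟨_, hmain⟩ | hmain
    · exact hmain (k + 1) (by omega) (by omega)
    · exact hmain (k + 1) (by omega)

lemma disjoint_Gset_Fset (n : ℕ) : Disjoint (Gset τ A n) (Fset τ A (n + 1)) := by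
  rw [Set.disjoint_left]
  intro x hxG hxF
  have h1 := (mem_Gset.mp hxG).1
  have h2 := mem_Fset.mp hxF 0 (by omega)
  simp only [Function.iterate_zero_apply] at h2
  exact h2 h1

variable {μ : Measure X} [IsProbabilityMeasure μ]

lemma measure_Fset_eq (hτ : Measurable τ) (hpres : MeasurePreserving τ μ μ)
    (hA : MeasurableSet A) (n : ℕ) :
    μ (Fset τ A n) = μ (Gset τ A n) + μ (Fset τ A (n + 1)) := by
  have h1 : μ (Fset τ A n) = μ (τ ⁻¹' (Fset τ A n)) :=
    (hpres.measure_preimage (measurable_Fset hτ hA n).nullMeasurableSet).symm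
  rw [h1, preimage_Fset, measure_union (disjoint_Gset_Fset n) (measurable_Fset hτ hA (n + 1))]

/-- Kac-type estimate: the measures of the `Gset`s are summable with sum at most `1`. -/
lemma tsum_Gset_le (hτ : Measurable τ) (hpres : MeasurePreserving τ μ μ)
    (hA : MeasurableSet A) : ∑' n, μ (Gset τ A n) ≤ 1 := by
  have hpartial : ∀ N : ℕ,
      ∑ n ∈ Finset.range N, μ (Gset τ A n) + μ (Fset τ A N) = μ (Fset τ A 0) := by
    intro N
    induction N with
    | zero => simp
    | succ N ih =>
      rw [Finset.sum_range_succ, ← ih, measure_Fset_eq hτ hpres hA N]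
      ring
  have hF0 : μ (Fset τ A 0) = 1 := by
    have : Fset τ A 0 = univ := by
      ext x; simp [mem_Fset]
    rw [this, measure_univ]
  refine Summable.tsum_le_of_sum_range_le ENNReal.summable fun N => ?_
  calc ∑ n ∈ Finset.range N, μ (Gset τ A n)
      ≤ ∑ n ∈ Finset.range N, μ (Gset τ A n) + μ (Fset τ A N) := le_self_add
    _ = 1 := by rw [hpartial N, hF0]

/-- The set of points of `A` that never return to `A` is null. -/
lemma measure_never_return (hτ : Measurable τ) (hpres : MeasurePreserving τ μ μ)
    (hA : MeasurableSet A) : μ {x | x ∈ A ∧ ret τ A x = 0} = 0 := by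
  set Z := {x | x ∈ A ∧ ret τ A x = 0} with hZ
  have hsub : ∀ n, Z ⊆ Gset τ A n := by
    intro n x hx
    rw [mem_Gset]
    exact ⟨hx.1, fun k hk _ => ret_eq_zero_iff.mp hx.2 k hk⟩
  by_contra h0
  have hconst : ∑' _ : ℕ, μ Z ≤ ∑' n, μ (Gset τ A n) :=
    ENNReal.tsum_le_tsum fun n => measure_mono (hsub n)
  have htop : ∑' _ : ℕ, μ Z = ⊤ := ENNReal.tsum_const_eq_top_of_ne_zero h0
  have := hconst.trans (tsum_Gset_le hτ hpres hA)
  rw [htop] at this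
  exact absurd this (by simp)


lemma tsum_Gset_div_le (hτ : Measurable τ) (hpres : MeasurePreserving τ μ μ)
    (hA : MeasurableSet A) (q : ℕ) (hq : q ≠ 0) :
    ∑' j : ℕ, μ (Gset τ A (j / q)) ≤ q := by
  haveI : NeZero q := ⟨hq⟩
  have h1 : ∑' j : ℕ, μ (Gset τ A (j / q)) = ∑' p : ℕ × Fin q, μ (Gset τ A p.1) :=
    Equiv.tsum_eq (Nat.divModEquiv q) (fun p : ℕ × Fin q => μ (Gset τ A p.1))
  rw [h1, ENNReal.tsum_prod']
  have h2 : ∀ a : ℕ, ∑' _ : Fin q, μ (Gset τ A a) = (q : ℝ≥0∞) * μ (Gset τ A a) := by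
    intro a
    rw [tsum_fintype]
    simp [Finset.sum_const, nsmul_eq_mul]
  calc ∑' (a : ℕ), ∑' (_ : Fin q), μ (Gset τ A (a, (0:Fin q)).1)
      = ∑' a : ℕ, (q : ℝ≥0∞) * μ (Gset τ A a) := by simp_rw [h2]
    _ = (q : ℝ≥0∞) * ∑' a : ℕ, μ (Gset τ A a) := ENNReal.tsum_mul_left
    _ ≤ (q : ℝ≥0∞) * 1 := mul_le_mul_right (tsum_Gset_le hτ hpres hA) _
    _ = q := mul_one _

lemma iter_mem_A {x : X} (hxA : x ∈ A) :
    ∀ j, (∀ i < j, ret τ A ((ind τ A)^[i] x) ≠ 0) → (ind τ A)^[j] x ∈ A := by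
  intro j
  induction j with
  | zero => exact fun _ => by simpa using hxA
  | succ j ih =>
    intro h
    rw [Function.iterate_succ_apply']
    exact ind_mem (h j (by omega))

/-- The good set: points of `A` whose return chain never dies and whose return times
are eventually at most `j / q + 1`. -/
def Good (τ : X → X) (A : Set X) : Set X :=
  A ∩ (⋂ j : ℕ, {x | ret τ A ((ind τ A)^[j] x) ≠ 0}) ∩
    ⋂ q : ℕ, ⋃ N : ℕ, ⋂ j : ℕ, ⋂ (_ : N ≤ j), {x | ret τ A ((ind τ A)^[j] x) ≤ j / (q + 1) + 1}

lemma mem_Good {x : X} :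
    x ∈ Good τ A ↔ x ∈ A ∧ (∀ j, ret τ A ((ind τ A)^[j] x) ≠ 0) ∧
      ∀ q : ℕ, ∃ N, ∀ j, N ≤ j → ret τ A ((ind τ A)^[j] x) ≤ j / (q + 1) + 1 := by
  simp only [Good, mem_inter_iff, mem_iInter, mem_iUnion, mem_setOf_eq, mem_iInter]
  tauto

lemma measurable_Good (hτ : Measurable τ) (hA : MeasurableSet A) :
    MeasurableSet (Good τ A) := by
  have hret : Measurable (ret τ A) := measurable_ret hτ hA
  have hind : Measurable (ind τ A) := measurable_ind hτ hA
  refine (hA.inter ?_).inter ?_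
  · exact MeasurableSet.iInter fun j =>
      ((hind.iterate j) (hret (measurableSet_singleton 0))).compl
  · refine MeasurableSet.iInter fun q => MeasurableSet.iUnion fun N =>
      MeasurableSet.iInter fun j => MeasurableSet.iInter fun _ => ?_
    have : {x | ret τ A ((ind τ A)^[j] x) ≤ j / (q + 1) + 1} =
        ((ind τ A)^[j]) ⁻¹' (ret τ A ⁻¹' (Iic (j / (q + 1) + 1))) := rfl
    rw [this]
    exact (hind.iterate j) (hret measurableSet_Iic)

/-- Almost every point of `A` is good. -/
lemma ae_good (hτ : Measurable τ) (hpres : MeasurePreserving τ μ μ)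
    (hA : MeasurableSet A) : μ (A \ Good τ A) = 0 := by
  set Z := {x | x ∈ A ∧ ret τ A x = 0} with hZdef
  have hZm : MeasurableSet Z := by
    have : Z = A ∩ ret τ A ⁻¹' {0} := by
      ext x; simp [hZdef]
    rw [this]
    exact hA.inter ((measurable_ret hτ hA) (measurableSet_singleton 0))
  have hZA : Z ⊆ A := fun x hx => hx.1
  have hZ0 : μ Z = 0 := measure_never_return hτ hpres hA
  -- dead chains are null
  have hdead : ∀ j, μ (chain τ A j Z) = 0 := fun j => by
    rw [chain_measure hτ hpres hA j hZm hZA]; exact hZ0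
  -- bad sets are eventually avoided
  have hbadsum : ∀ q : ℕ, (∑' j : ℕ, μ (chain τ A j (Gset τ A (j / (q + 1) + 1)))) ≠ ⊤ := by
    intro q
    have hle : ∀ j : ℕ, μ (chain τ A j (Gset τ A (j / (q + 1) + 1))) ≤
        μ (Gset τ A (j / (q + 1))) := by
      intro j
      rw [chain_measure hτ hpres hA j (measurable_Gset hτ hA _) Gset_subset_A]
      exact measure_mono (Gset_anti (by omega))
    have := (ENNReal.tsum_le_tsum hle).trans (tsum_Gset_div_le hτ hpres hA (q + 1) (by omega))
    exact ne_top_of_le_ne_top (ENNReal.natCast_ne_top _) this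
  have hbc : ∀ᵐ x ∂μ, ∀ q : ℕ, ∀ᶠ j in atTop,
      x ∉ chain τ A j (Gset τ A (j / (q + 1) + 1)) := by
    rw [ae_all_iff]
    intro q
    exact ae_eventually_notMem (hbadsum q)
  have hdc : ∀ᵐ x ∂μ, ∀ j : ℕ, x ∉ chain τ A j Z := by
    rw [ae_all_iff]
    intro j
    rw [ae_iff]
    simpa using hdead j
  have hsub : ∀ x, (∀ q : ℕ, ∀ᶠ j in atTop, x ∉ chain τ A j (Gset τ A (j / (q + 1) + 1))) →
      (∀ j, x ∉ chain τ A j Z) → x ∉ A \ Good τ A := by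
    intro x hx1 hx2 hmem
    obtain ⟨hxA, hxG⟩ := hmem
    apply hxG
    rw [mem_Good]
    have halive : ∀ j, ret τ A ((ind τ A)^[j] x) ≠ 0 := by
      by_contra h0
      push_neg at h0
      have hex : ∃ j, ret τ A ((ind τ A)^[j] x) = 0 := h0
      classical
      have hj0 : ret τ A ((ind τ A)^[Nat.find hex] x) = 0 := Nat.find_spec hex
      have hmin : ∀ i < Nat.find hex, ret τ A ((ind τ A)^[i] x) ≠ 0 :=
        fun i hi => Nat.find_min hex hi
      have hSA : (ind τ A)^[Nat.find hex] x ∈ A := iter_mem_A hxA _ hmin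
      exact hx2 (Nat.find hex) (mem_chain.mpr ⟨hxA, hmin, hSA, hj0⟩)
    refine ⟨hxA, halive, ?_⟩
    intro q
    obtain ⟨N, hN⟩ := eventually_atTop.mp (hx1 q)
    refine ⟨N, fun j hj => ?_⟩
    have hnot := hN j hj
    have hSA : (ind τ A)^[j] x ∈ A := iter_mem_A hxA _ (fun i _ => halive i)
    by_contra hgt
    push_neg at hgt
    apply hnot
    rw [mem_chain]
    refine ⟨hxA, fun i _ => halive i, ?_⟩
    rw [mem_Gset]
    refine ⟨hSA, fun k hk hkle => ?_⟩
    intro hmemA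
    have := ret_le (x := (ind τ A)^[j] x) hk hmemA
    omega
  rw [measure_eq_zero_iff_ae_notMem]
  filter_upwards [hbc, hdc] with x hx1 hx2 using hsub x hx1 hx2


/-- Ergodic sweep: a.e. point eventually enters a set of positive measure. -/
lemma ae_sweep (hτ : Ergodic τ μ) {s : Set X} (hs : MeasurableSet s) (h0 : μ s ≠ 0) :
    ∀ᵐ x ∂μ, ∃ t : ℕ, τ^[t] x ∈ s := by
  have hmeas : Measurable τ := hτ.toMeasurePreserving.measurable
  set U := ⋃ t : ℕ, τ^[t] ⁻¹' s with hU
  have hUm : MeasurableSet U := MeasurableSet.iUnion fun t => (hmeas.iterate t) hs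
  have hpre : τ ⁻¹' U ⊆ U := by
    intro x hx
    have hx' : τ x ∈ U := hx
    rw [hU, mem_iUnion] at hx' ⊢
    obtain ⟨t, ht⟩ := hx'
    refine ⟨t + 1, ?_⟩
    rw [mem_preimage] at ht ⊢
    rw [Function.iterate_succ_apply]
    exact ht
  have hle : τ ⁻¹' U ≤ᶠ[ae μ] U := Filter.Eventually.of_forall fun x hx => hpre hx
  rcases hτ.ae_empty_or_univ_of_preimage_ae_le' hUm.nullMeasurableSet hle
      (measure_ne_top μ U) with h | h
  · exfalso
    have hU0 : μ U = 0 := by rwa [ae_eq_empty] at h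
    have : μ s ≤ μ U := by
      apply measure_mono
      intro z hz
      rw [hU, mem_iUnion]
      exact ⟨0, by simpa using hz⟩
    exact h0 (le_antisymm (hU0 ▸ this) (zero_le))
  · have := ae_eq_univ.mp h
    rw [ae_iff]
    have hsub : {x | ¬∃ t : ℕ, τ^[t] x ∈ s} ⊆ Uᶜ := by
      intro z hz hzU
      rw [hU, mem_iUnion] at hzU
      obtain ⟨t, ht⟩ := hzU
      exact hz ⟨t, ht⟩
    exact le_antisymm (this ▸ measure_mono hsub) (zero_le)

/-- The pointwise computation: if the orbit of `x` enters the good set, then the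
limsup is `0`. -/
lemma limsup_eq_zero_of_good {f : X → ℝ} (hnn : ∀ z, 0 ≤ f z) {M : ℕ}
    (hAdef : ∀ z, z ∈ A ↔ ∀ n : ℕ, 0 < n → f (τ^[n] z) ≤ M * n)
    {x : X} (hx : ∃ t : ℕ, τ^[t] x ∈ Good τ A) :
    Filter.limsup (fun n : ℕ => ((f (τ^[n] x) / n : ℝ) : EReal)) atTop = 0 := by
  classical
  obtain ⟨t₀, hy⟩ := hx
  set y := τ^[t₀] x with hydef
  rw [mem_Good] at hy
  obtain ⟨hyA, halive, hgood⟩ := hy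
  set e : ℕ → ℕ := fun j => ret τ A ((ind τ A)^[j] y) with he
  set r : ℕ → ℕ := fun j => ∑ i ∈ Finset.range j, e i with hr
  have he1 : ∀ j, 1 ≤ e j := fun j => Nat.pos_of_ne_zero (halive j)
  have hrj : ∀ j, j ≤ r j := by
    intro j
    calc j = ∑ _i ∈ Finset.range j, 1 := by simp
    _ ≤ r j := Finset.sum_le_sum fun i _ => he1 i
  have hrsucc : ∀ j, r (j + 1) = r j + e j := by
    intro j
    simp only [hr, Finset.sum_range_succ]
  have hiter : ∀ j, (ind τ A)^[j] y = τ^[r j] y := by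
    intro j
    induction j with
    | zero => simp [hr]
    | succ j ih =>
      have hej : e j = ret τ A (τ^[r j] y) := by rw [he]; simp only; rw [ih]
      rw [Function.iterate_succ_apply', ih]
      show τ^[ret τ A (τ^[r j] y)] (τ^[r j] y) = τ^[r (j + 1)] y
      rw [← hej, ← Function.iterate_add_apply]
      congr 1
      rw [hrsucc j]
      omega
  have hSA : ∀ j, τ^[r j] y ∈ A := by
    intro j
    rw [← hiter]
    exact iter_mem_A hyA j (fun i _ => halive i)
  have hAprop : ∀ z, z ∈ A → ∀ n : ℕ, 0 < n → f (τ^[n] z) ≤ M * n :=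
    fun z hz => (hAdef z).mp hz
  have hM0 : (0:ℝ) ≤ (M:ℝ) := Nat.cast_nonneg M
  have hbound : ∀ q : ℕ, ∀ᶠ n : ℕ in atTop,
      ((f (τ^[n] x) / n : ℝ) : EReal) ≤ (((2 * M / (q + 1) : ℝ)) : EReal) := by
    intro q
    obtain ⟨N, hN⟩ := hgood q
    refine eventually_atTop.mpr ⟨t₀ + r N + q + 2, fun n hn => ?_⟩
    obtain ⟨m, hmn, hrNm, hmq⟩ : ∃ m, n = m + t₀ ∧ r N < m ∧ q + 1 ≤ m := by
      refine ⟨n - t₀, by omega, by omega, by omega⟩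
    obtain ⟨j, hjN, hd1, hnext⟩ : ∃ j, N ≤ j ∧ r j ≤ m - 1 ∧ m - 1 < r (j + 1) := by
      have hPN' : r N ≤ m - 1 := by omega
      have hNle : N ≤ m - 1 := le_trans (hrj N) hPN'
      refine ⟨Nat.findGreatest (fun j => r j ≤ m - 1) (m - 1), ?_, ?_, ?_⟩
      · exact Nat.le_findGreatest (P := fun j => r j ≤ m - 1) hNle hPN'
      · exact Nat.findGreatest_spec (P := fun j => r j ≤ m - 1) hNle hPN'
      · by_cases hc : Nat.findGreatest (fun j => r j ≤ m - 1) (m - 1) + 1 ≤ m - 1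
        · have hng := Nat.findGreatest_is_greatest (P := fun j => r j ≤ m - 1)
            (Nat.lt_succ_self _) hc
          exact Nat.not_le.mp hng
        · exact lt_of_lt_of_le (Nat.not_le.mp hc) (hrj _)
    have hm1 : 1 ≤ m := by omega
    have hdle : m - r j ≤ e j := by
      have := hrsucc j
      omega
    have hjle : j ≤ m := le_trans (hrj j) (by omega)
    have hfb : f (τ^[m] y) ≤ (M : ℝ) * ((m - r j : ℕ) : ℝ) := by
      have hsplit : τ^[m] y = τ^[m - r j] (τ^[r j] y) := by
        have hmm : m - r j + r j = m := by omega
        conv_lhs => rw [← hmm]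
        rw [Function.iterate_add_apply]
      rw [hsplit]
      exact hAprop _ (hSA j) _ (by omega)
    have hed : (m - r j : ℕ) ≤ m / (q + 1) + 1 := by
      have h1 : e j ≤ j / (q + 1) + 1 := hN j hjN
      have h2 : j / (q + 1) ≤ m / (q + 1) := Nat.div_le_div_right hjle
      omega
    have hq1 : (0:ℝ) < (q:ℝ) + 1 := by positivity
    have hnpos : (0:ℝ) < (n:ℝ) := by
      have h : 0 < n := by omega
      exact_mod_cast h
    have hnq : ((q:ℝ) + 1) ≤ (n:ℝ) := by
      have h : q + 1 ≤ n := by omega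
      exact_mod_cast h
    have hd2 : ((m - r j : ℕ) : ℝ) ≤ 2 * (n:ℝ) / ((q:ℝ) + 1) := by
      have hdm : ((m - r j : ℕ) : ℝ) ≤ ((m / (q + 1) : ℕ) : ℝ) + 1 := by
        exact_mod_cast hed
      have h3 : ((m / (q + 1) : ℕ) : ℝ) ≤ (m : ℝ) / ((q:ℝ) + 1) := by
        have h := Nat.cast_div_le (α := ℝ) (m := m) (n := q + 1)
        push_cast at h
        exact h
      have h4 : (m:ℝ) ≤ (n:ℝ) := by
        have h : m ≤ n := by omega
        exact_mod_cast h
      have h5 : (1:ℝ) ≤ (n:ℝ) / ((q:ℝ) + 1) := (le_div_iff₀ hq1).mpr (by linarith)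
      have h6 : (m:ℝ) / ((q:ℝ) + 1) ≤ (n:ℝ) / ((q:ℝ) + 1) := by
        apply div_le_div_of_nonneg_right h4 hq1.le
      calc ((m - r j : ℕ) : ℝ) ≤ (m : ℝ) / ((q:ℝ) + 1) + 1 := by linarith
      _ ≤ (n:ℝ) / ((q:ℝ) + 1) + (n:ℝ) / ((q:ℝ) + 1) := by linarith
      _ = 2 * (n:ℝ) / ((q:ℝ) + 1) := by ring
    have heq : f (τ^[n] x) = f (τ^[m] y) := by
      rw [hmn, Function.iterate_add_apply, ← hydef]
    have hfn : f (τ^[n] x) / (n:ℝ) ≤ 2 * (M:ℝ) / ((q:ℝ) + 1) := by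
      rw [heq, div_le_iff₀ hnpos]
      calc f (τ^[m] y) ≤ (M:ℝ) * ((m - r j : ℕ) : ℝ) := hfb
      _ ≤ (M:ℝ) * (2 * (n:ℝ) / ((q:ℝ) + 1)) := mul_le_mul_of_nonneg_left hd2 hM0
      _ = 2 * (M:ℝ) / ((q:ℝ) + 1) * (n:ℝ) := by field_simp
    exact EReal.coe_le_coe_iff.mpr hfn
  have hge0 : (0 : EReal) ≤ Filter.limsup (fun n : ℕ => ((f (τ^[n] x) / n : ℝ) : EReal)) atTop := by
    refine Filter.le_limsup_of_frequently_le (Filter.Frequently.of_forall fun n => ?_) ?_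
    · have h : (0:ℝ) ≤ f (τ^[n] x) / n := div_nonneg (hnn _) (Nat.cast_nonneg n)
      exact_mod_cast h
    · isBoundedDefault
  have hle0 : Filter.limsup (fun n : ℕ => ((f (τ^[n] x) / n : ℝ) : EReal)) atTop ≤ 0 := by
    by_contra hpos
    push_neg at hpos
    obtain ⟨c, hc1, hc2⟩ := EReal.lt_iff_exists_real_btwn.mp hpos
    have hc0 : (0:ℝ) < c := by exact_mod_cast hc1
    obtain ⟨q, hq⟩ : ∃ q : ℕ, 2 * (M:ℝ) / ((q:ℝ) + 1) < c := by
      refine ⟨⌈2 * (M:ℝ) / c⌉₊, ?_⟩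
      have h1 : 2 * (M:ℝ) / c ≤ ((⌈2 * (M:ℝ) / c⌉₊ : ℕ) : ℝ) := Nat.le_ceil _
      have h1' : 2 * (M:ℝ) ≤ ((⌈2 * (M:ℝ) / c⌉₊ : ℕ) : ℝ) * c := (div_le_iff₀ hc0).mp h1
      rw [div_lt_iff₀ (by positivity)]
      nlinarith
    have hlim := Filter.limsup_le_of_le (h := hbound q)
    have hlt : ((2 * (M:ℝ) / ((q:ℝ) + 1) : ℝ) : EReal) < (c : EReal) := EReal.coe_lt_coe_iff.mpr hq
    exact absurd (lt_of_le_of_lt (hlim.trans hlt.le) hc2) (lt_irrefl _)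
  exact le_antisymm hle0 hge0

end TannyAux


open TannyAux in
/-- **Tanny's ergodic lemma.** If `τ` is an ergodic measure-preserving
transformation of a probability space `(X, μ)` and `f ≥ 0` is measurable, then
`limsup f(τⁿ x)/n` (in the extended reals) is `0` a.e. or `∞` a.e. -/
theorem stmt_16
    {X : Type*} [MeasurableSpace X] (μ : Measure X) [IsProbabilityMeasure μ]
    (τ : X → X) (hτ : Ergodic τ μ)
    (f : X → ℝ) (hmf : Measurable f) (hnn : ∀ x, 0 ≤ f x) :
    (∀ᵐ x ∂μ,
      Filter.limsup (fun n : ℕ => ((f (τ^[n] x) / n : ℝ) : EReal)) atTop = 0) ∨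
    (∀ᵐ x ∂μ,
      Filter.limsup (fun n : ℕ => ((f (τ^[n] x) / n : ℝ) : EReal)) atTop = ⊤) := by
  have hmeas : Measurable τ := hτ.toMeasurePreserving.measurable
  have hpres : MeasurePreserving τ μ μ := hτ.toMeasurePreserving
  set Aset : ℕ → Set X := fun M =>
    ⋂ (n : ℕ), ⋂ (_ : 0 < n), (fun x => f (τ^[n] x)) ⁻¹' Iic ((M : ℝ) * n) with hAdef
  have hAmem : ∀ M x, x ∈ Aset M ↔ ∀ n : ℕ, 0 < n → f (τ^[n] x) ≤ M * n := by
    intro M x; simp [hAdef, mem_iInter]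
  have hAmeas : ∀ M, MeasurableSet (Aset M) := by
    intro M
    exact MeasurableSet.iInter fun n => MeasurableSet.iInter fun _ =>
      (hmf.comp (hmeas.iterate n)) measurableSet_Iic
  by_cases hall : ∀ M : ℕ, μ (Aset M) = 0
  · right
    have hae : ∀ᵐ x ∂μ, ∀ M : ℕ, x ∉ Aset M := by
      rw [ae_all_iff]
      intro M
      rw [ae_iff]
      simpa using hall M
    filter_upwards [hae] with x hx
    by_contra hne
    have hlt : Filter.limsup (fun n : ℕ => ((f (τ^[n] x) / n : ℝ) : EReal)) atTop < ⊤ :=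
      lt_top_iff_ne_top.mpr hne
    obtain ⟨B, hB1, _⟩ := EReal.lt_iff_exists_real_btwn.mp hlt
    have hev : ∀ᶠ n : ℕ in atTop, ((f (τ^[n] x) / n : ℝ) : EReal) < (B : EReal) :=
      eventually_lt_of_limsup_lt hB1
    obtain ⟨N, hN⟩ := eventually_atTop.mp hev
    set M : ℕ := max ⌈B⌉₊ ((Finset.range N).sup fun n => ⌈f (τ^[n] x)⌉₊) with hM
    apply hx M
    rw [hAmem]
    intro n hn
    have hnR : (0:ℝ) < n := by exact_mod_cast hn
    by_cases hcase : N ≤ n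
    · have h1 : f (τ^[n] x) / n < B := by exact_mod_cast hN n hcase
      have hBM : B ≤ (M:ℝ) := by
        calc B ≤ (⌈B⌉₊ : ℝ) := Nat.le_ceil B
        _ ≤ (M:ℝ) := by exact_mod_cast Nat.le_max_left _ _
      calc f (τ^[n] x) = f (τ^[n] x) / n * n := by field_simp
      _ ≤ B * n := by nlinarith
      _ ≤ (M:ℝ) * n := by nlinarith
    · push_neg at hcase
      have h2 : ⌈f (τ^[n] x)⌉₊ ≤ M :=
        le_max_of_le_right (Finset.le_sup (f := fun n => ⌈f (τ^[n] x)⌉₊) (Finset.mem_range.mpr hcase))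
      calc f (τ^[n] x) ≤ (⌈f (τ^[n] x)⌉₊ : ℝ) := Nat.le_ceil _
      _ ≤ (M:ℝ) := by exact_mod_cast h2
      _ ≤ (M:ℝ) * n := le_mul_of_one_le_right (Nat.cast_nonneg M) (by exact_mod_cast hn)
  · left
    push_neg at hall
    obtain ⟨M, hM0⟩ := hall
    set A := Aset M with hA'
    have hA : MeasurableSet A := hAmeas M
    have hGood : μ (TannyAux.Good τ A) ≠ 0 := by
      have h1 : μ (A \ TannyAux.Good τ A) = 0 := ae_good hmeas hpres hA
      intro h0
      apply hM0
      have hsub : A ⊆ (A \ TannyAux.Good τ A) ∪ TannyAux.Good τ A := by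
        intro z hz
        by_cases hg : z ∈ TannyAux.Good τ A
        · exact Or.inr hg
        · exact Or.inl ⟨hz, hg⟩
      have : μ A ≤ 0 := by
        calc μ A ≤ μ ((A \ TannyAux.Good τ A) ∪ TannyAux.Good τ A) := measure_mono hsub
        _ ≤ μ (A \ TannyAux.Good τ A) + μ (TannyAux.Good τ A) := measure_union_le _ _
        _ = 0 := by rw [h1, h0, add_zero]
      exact le_antisymm this (zero_le)
    have hsweep := ae_sweep hτ (measurable_Good hmeas hA) hGood
    filter_upwards [hsweep] with x hx
    exact limsup_eq_zero_of_good hnn (fun z => hAmem M z) hx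
end
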